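/- arXiv:2601.09061 — 9 statements merged into one kernel-verified Lean document; each statement's English description precedes it below -/
import Mathlib

section
/- For every f ∈ 𝓕, 𝓛_f is a proper tall ideal on P_f: P_f itself is not in 𝓛_f, and every infinite subset of P_f contains an infinite subset belonging to 𝓛_f. -/
/-- `𝓕`: increasing functions `f : ℕ → ℕ` with `f n ≥ n²` for all `n`. -/
def FancyF : Set (ℕ → ℕ) := {f | Monotone f ∧ ∀ n, n ^ 2 ≤ f n}

/-- `P_f`: finite sequences `s` with `s i ≤ f i` for all `i < |s|`. -/
def Pf (f : ℕ → ℕ) : Set (List ℕ) := {s | ∀ i < s.length, s.getD i 0 ≤ f i}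

/-- An `(n+1)`-slalom: `|Z i| ≤ i + 1` for all `i`. -/
def IsSlalom (Z : ℕ → Finset ℕ) : Prop := ∀ i, (Z i).card ≤ i + 1

/-- `C_f(Z)`: members of `P_f` running through the slalom `Z`. -/
def Cf (f : ℕ → ℕ) (Z : ℕ → Finset ℕ) : Set (List ℕ) :=
  {s | s ∈ Pf f ∧ ∀ i < s.length, s.getD i 0 ∈ Z i}

/-- Membership in the ideal `𝓛_f`: covered by finitely many sets `C_f(Z)`. -/
def MemLf (f : ℕ → ℕ) (A : Set (List ℕ)) : Prop :=
  ∃ F : Finset (ℕ → Finset ℕ), (∀ Z ∈ F, IsSlalom Z) ∧ A ⊆ ⋃ Z ∈ F, Cf f Z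

/-- Auxiliary: escaping a small finset below a bound. -/
lemma escape_aux (Z : Finset ℕ) (b : ℕ) (h : Z.card ≤ b) : ∃ v, v ≤ b ∧ v ∉ Z := by
  have hns : ¬ (Finset.range (b + 1) ⊆ Z) := by
    intro hsub
    have := Finset.card_le_card hsub
    simp [Finset.card_range] at this
    omega
  obtain ⟨v, hv1, hv2⟩ := Finset.not_subset.mp hns
  exact ⟨v, Nat.lt_succ_iff.mp (Finset.mem_range.mp hv1), hv2⟩

/-- Auxiliary pigeonhole: an infinite subset of `Pf f` has an infinite subset with
constant `m`-th entry (in the `getD` sense). -/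
lemma pigeon_aux (f : ℕ → ℕ) (Y : Set (List ℕ)) (hY : Y.Infinite) (hYP : Y ⊆ Pf f) (m : ℕ) :
    ∃ v, {s ∈ Y | s.getD m 0 = v}.Infinite := by
  by_contra h
  push_neg at h
  have hsub : Y ⊆ ⋃ v ∈ Finset.range (f m + 1), {s ∈ Y | s.getD m 0 = v} := by
    intro s hs
    have hb : s.getD m 0 ≤ f m := by
      by_cases hm : m < s.length
      · exact hYP hs m hm
      · rw [List.getD_eq_default _ _ (by omega)]; exact Nat.zero_le _
    exact Set.mem_biUnion (Finset.mem_range.mpr (Nat.lt_succ_of_le hb)) ⟨hs, rfl⟩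
  exact hY (((Finset.range (f m + 1)).finite_toSet.biUnion (fun v _ => h v)).subset hsub)

/-- For every `f ∈ 𝓕`, `𝓛_f` is a proper tall ideal on `P_f`: `P_f ∉ 𝓛_f` and
every infinite subset of `P_f` contains an infinite subset in `𝓛_f`. -/
theorem stmt1 (f : ℕ → ℕ) (hf : f ∈ FancyF) :
    ¬ MemLf f (Pf f) ∧
      ∀ X ⊆ Pf f, X.Infinite → ∃ X' ⊆ X, X'.Infinite ∧ MemLf f X' := by
  have hf2 := hf.2
  constructor
  · -- properness
    rintro ⟨F, hF, hsub⟩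
    set L := F.toList with hL
    set m := L.length with hm
    have hesc : ∀ i, 2 ≤ i → ∀ hi : i - 2 < m, ∃ v, v ≤ f i ∧ v ∉ (L.get ⟨i - 2, hi⟩) i := by
      intro i hi2 hi
      apply escape_aux
      have hmem : L.get ⟨i - 2, hi⟩ ∈ F := Finset.mem_toList.mp (List.get_mem L ⟨i - 2, hi⟩)
      have hcard := hF _ hmem i
      have h1 : i + 1 ≤ i ^ 2 := by nlinarith
      exact le_trans hcard (le_trans h1 (hf2 i))
    let g : ℕ → ℕ := fun i =>
      if h : 2 ≤ i ∧ i - 2 < m then Classical.choose (hesc i h.1 h.2) else 0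
    have hg_le : ∀ i, g i ≤ f i := by
      intro i
      by_cases h : 2 ≤ i ∧ i - 2 < m
      · simp only [g, dif_pos h]
        exact (Classical.choose_spec (hesc i h.1 h.2)).1
      · simp only [g, dif_neg h]; exact Nat.zero_le _
    let s : List ℕ := List.ofFn (fun i : Fin (m + 2) => g i)
    have hslen : s.length = m + 2 := List.length_ofFn
    have hsget : ∀ i (h : i < s.length), s.getD i 0 = g i := by
      intro i h
      rw [List.getD_eq_getElem _ _ h, List.getElem_ofFn]
    have hsPf : s ∈ Pf f := fun i hi => (hsget i hi) ▸ hg_le i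
    have := hsub hsPf
    simp only [Set.mem_iUnion] at this
    obtain ⟨Z, hZF, hZPf, hZrun⟩ := this
    obtain ⟨⟨j, hj⟩, hjZ⟩ := List.mem_iff_get.mp (Finset.mem_toList.mpr hZF)
    have hj' : j < m := hj
    have hij : j + 2 < s.length := by rw [hslen]; omega
    have hcond : 2 ≤ j + 2 ∧ (j + 2) - 2 < m := ⟨by omega, by omega⟩
    have hgval : g (j + 2) = Classical.choose (hesc (j + 2) hcond.1 hcond.2) := dif_pos hcond
    have hnot := (Classical.choose_spec (hesc (j + 2) hcond.1 hcond.2)).2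
    have hrun := hZrun (j + 2) hij
    rw [hsget _ hij, hgval] at hrun
    have heq : L.get ⟨(j + 2) - 2, hcond.2⟩ = Z := hjZ
    exact hnot (heq.symm ▸ hrun)
  · -- tallness
    intro X hX hXinf
    -- the decreasing chain of infinite sets with fixed initial entries
    let T := {Y : Set (List ℕ) // Y.Infinite ∧ Y ⊆ Pf f ∧ Y ⊆ X}
    let v : ℕ → T → ℕ := fun m Y => Classical.choose (pigeon_aux f Y.1 Y.2.1 Y.2.2.1 m)
    let step : ℕ → T → T := fun m Y =>
      ⟨{s ∈ Y.1 | s.getD m 0 = v m Y},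
        Classical.choose_spec (pigeon_aux f Y.1 Y.2.1 Y.2.2.1 m),
        fun s hs => Y.2.2.1 hs.1, fun s hs => Y.2.2.2 hs.1⟩
    let C : ℕ → T := fun m => Nat.rec ⟨X, hXinf, hX, subset_rfl⟩ step m
    let x : ℕ → ℕ := fun m => v m (C m)
    have hCsucc : ∀ m, (C (m + 1)).1 = {s ∈ (C m).1 | s.getD m 0 = x m} := fun m => rfl
    have hagree : ∀ m, ∀ s ∈ (C m).1, ∀ i < m, s.getD i 0 = x i := by
      intro m
      induction m with
      | zero => intro s _ i hi; omega
      | succ m ih =>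
        intro s hs i hi
        rw [hCsucc m] at hs
        rcases Nat.lt_succ_iff_lt_or_eq.mp hi with h | h
        · exact ih s hs.1 i h
        · rw [h]; exact hs.2
    -- pick pairwise distinct elements
    have hpick : ∀ (k : ℕ) (u : Finset (List ℕ)), ((C k).1 \ ↑u).Nonempty :=
      fun k u => ((C k).2.1.diff u.finite_toSet).nonempty
    let τ : ℕ → List ℕ × Finset (List ℕ) := fun k => Nat.rec
      ⟨Classical.choose (hpick 1 ∅), {Classical.choose (hpick 1 ∅)}⟩
      (fun k q => ⟨Classical.choose (hpick (k + 2) q.2),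
        insert (Classical.choose (hpick (k + 2) q.2)) q.2⟩) k
    let σ : ℕ → List ℕ := fun k => (τ k).1
    have hσC : ∀ k, σ k ∈ (C (k + 1)).1 := by
      intro k
      cases k with
      | zero => exact (Classical.choose_spec (hpick 1 ∅)).1
      | succ k => exact (Classical.choose_spec (hpick (k + 2) (τ k).2)).1
    have hτ1 : ∀ k, σ (k + 1) = Classical.choose (hpick (k + 2) (τ k).2) := fun k => rfl
    have hτ2 : ∀ k, (τ (k + 1)).2 = insert (σ (k + 1)) (τ k).2 := fun k => rfl
    have hτ02 : (τ 0).2 = {σ 0} := rfl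
    have hnew : ∀ k, σ (k + 1) ∉ (τ k).2 := by
      intro k
      have h2 := (Classical.choose_spec (hpick (k + 2) (τ k).2)).2
      rw [hτ1 k]
      intro hmem
      exact h2 (Finset.mem_coe.mpr hmem)
    have hmemτ : ∀ k, σ k ∈ (τ k).2 := by
      intro k
      cases k with
      | zero => rw [hτ02]; exact Finset.mem_singleton_self _
      | succ k => rw [hτ2 k]; exact Finset.mem_insert_self _ _
    have hmono : ∀ k, (τ k).2 ⊆ (τ (k + 1)).2 := fun k => (hτ2 k) ▸ Finset.subset_insert _ _
    have hle : ∀ j k, j ≤ k → σ j ∈ (τ k).2 := by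
      intro j k hjk
      induction k with
      | zero => rw [Nat.le_zero.mp hjk]; exact hmemτ 0
      | succ k ih =>
        rcases Nat.le_succ_iff.mp hjk with h | h
        · exact hmono k (ih h)
        · rw [h]; exact hmemτ (k + 1)
    have hinj : Function.Injective σ := by
      intro a b hab
      by_contra hne
      rcases Nat.lt_or_ge a b with h | h
      · obtain ⟨b, rfl⟩ := Nat.exists_eq_succ_of_ne_zero (by omega : b ≠ 0)
        exact hnew b (hab ▸ hle a b (by omega))
      · have h' : b < a := by omega
        obtain ⟨a, rfl⟩ := Nat.exists_eq_succ_of_ne_zero (by omega : a ≠ 0)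
        exact hnew a (hab ▸ hle b a (by omega))
    -- the slalom
    let Z : ℕ → Finset ℕ := fun i =>
      insert (x i) ((Finset.range i).image (fun k => (σ k).getD i 0))
    have hZslalom : IsSlalom Z := by
      intro i
      calc (Z i).card ≤ ((Finset.range i).image (fun k => (σ k).getD i 0)).card + 1 :=
            Finset.card_insert_le _ _
        _ ≤ i + 1 :=
            Nat.add_le_add_right
              (le_trans Finset.card_image_le (le_of_eq (Finset.card_range i))) 1
    have hcov : ∀ k, σ k ∈ Cf f Z := by
      intro k
      refine ⟨(C (k + 1)).2.2.1 (hσC k), ?_⟩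
      intro i hi
      by_cases hik : i < k + 1
      · rw [hagree (k + 1) (σ k) (hσC k) i hik]
        exact Finset.mem_insert_self _ _
      · refine Finset.mem_insert_of_mem (Finset.mem_image.mpr ⟨k, Finset.mem_range.mpr ?_, rfl⟩)
        omega
    refine ⟨Set.range σ, ?_, Set.infinite_range_of_injective hinj, ⟨{Z}, ?_, ?_⟩⟩
    · rintro t ⟨k, rfl⟩
      exact (C (k + 1)).2.2.2 (hσC k)
    · intro W hW
      rw [Finset.mem_singleton.mp hW]
      exact hZslalom
    · rintro t ⟨k, rfl⟩
      simp only [Set.mem_iUnion, Finset.mem_singleton]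
      exact ⟨Z, rfl, hcov k⟩
end

section
/- Let f(n) = n². Then 𝓛_f ≤_K nwd: there exists a function h : ℚ → P_f such that h⁻¹[A] is nowhere dense in ℚ for every A ∈ 𝓛_f. -/
/-- The ideal of nowhere dense subsets of `ℚ`. -/
def nwdIdeal : Set (Set ℚ) := {A | IsNowhereDense A}

/-- The Katětov order: `I ≤_K J` iff there is `h` from the domain of `J` to the
domain of `I` such that preimages of sets in `I` are in `J`. -/
def KatLe {α β : Type*} (I : Set (Set α)) (J : Set (Set β)) : Prop :=
  ∃ h : β → α, ∀ A ∈ I, h ⁻¹' A ∈ J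

/-- The ideal `𝓛_f` as a family of subsets of `P_f`. -/
def LfIdeal (f : ℕ → ℕ) : Set (Set (Pf f)) :=
  {A | MemLf f (Subtype.val '' A)}

noncomputable section AuxStmt2

/-- Product of `i² + 1` for `i < n`: the number of level-`n` cells per unit. -/
def mAux : ℕ → ℕ := fun n => ∏ i ∈ Finset.range n, (i^2+1)

lemma mAux_pos (n : ℕ) : 0 < mAux n := Finset.prod_pos (fun i _ => by positivity)

lemma mAux_succ (n : ℕ) : mAux (n+1) = mAux n * (n^2+1) := Finset.prod_range_succ _ _

lemma mAux_ge (n : ℕ) : n ≤ mAux n := by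
  induction n with
  | zero => simp [mAux]
  | succ n ih =>
    rw [mAux_succ]
    rcases Nat.eq_zero_or_pos n with h | h
    · subst h; simp [mAux]
    · calc n + 1 ≤ n * (n^2+1) := by nlinarith
        _ ≤ mAux n * (n^2+1) := Nat.mul_le_mul_right _ ih

/-- `i`-th digit of the address of `q` in the `√2`-shifted interval scheme. -/
def dig (q : ℚ) (i : ℕ) : ℕ :=
  (⌊((q:ℝ) - Real.sqrt 2) * (mAux (i+1) : ℝ)⌋ % ((i^2+1 : ℕ) : ℤ)).toNat

lemma dig_le (q : ℚ) (i : ℕ) : dig q i ≤ i^2 := by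
  have hpos : (0:ℤ) < ((i^2+1 : ℕ) : ℤ) := by positivity
  have h2 := Int.emod_lt_of_pos (⌊((q:ℝ) - Real.sqrt 2) * (mAux (i+1) : ℝ)⌋) hpos
  have h3 := Int.emod_nonneg (⌊((q:ℝ) - Real.sqrt 2) * (mAux (i+1) : ℝ)⌋) hpos.ne'
  apply Int.toNat_le.mpr
  push_cast at h2 ⊢
  omega

/-- The reduction map, at the level of lists. -/
def hFun (q : ℚ) : List ℕ := List.ofFn (fun j : Fin (Encodable.encode q + 2) => dig q j)

lemma hFun_length (q : ℚ) : (hFun q).length = Encodable.encode q + 2 := by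
  simp [hFun]

lemma hFun_getD (q : ℚ) (i : ℕ) (hi : i < Encodable.encode q + 2) :
    (hFun q).getD i 0 = dig q i := by
  rw [List.getD_eq_getElem _ _ (by simpa [hFun_length] using hi)]
  simp only [hFun, List.getElem_ofFn]

lemma hFun_mem (q : ℚ) : hFun q ∈ Pf (fun n => n ^ 2) := by
  intro i hi
  rw [hFun_length] at hi
  rw [hFun_getD q i hi]
  exact dig_le q i

end AuxStmt2

/-- For `f n = n²`, `𝓛_f ≤_K nwd`: there is `h : ℚ → P_f` such that `h⁻¹[A]` is
nowhere dense in `ℚ` for every `A ∈ 𝓛_f`. -/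
theorem stmt2 : KatLe (LfIdeal (fun n => n ^ 2)) nwdIdeal := by
  refine ⟨fun q => ⟨hFun q, hFun_mem q⟩, ?_⟩
  intro A hA
  obtain ⟨F, hF, hsub⟩ := hA
  set S : Set ℚ := (fun q => (⟨hFun q, hFun_mem q⟩ : Pf (fun n => n ^ 2))) ⁻¹' A with hS
  show IsNowhereDense S
  rw [IsNowhereDense, interior_eq_empty_iff_dense_compl, dense_iff_inter_open]
  intro U hUopen hUne
  obtain ⟨q₀, hq₀⟩ := hUne
  obtain ⟨ε, hε, hball⟩ := Metric.isOpen_iff.mp hUopen q₀ hq₀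
  -- choose the level n
  obtain ⟨n, hn2, hn3⟩ : ∃ n, F.card + 2 ≤ n ∧ ⌈ε⁻¹⌉₊ + 1 ≤ n :=
    ⟨max (F.card + 2) (⌈ε⁻¹⌉₊ + 1), le_max_left _ _, le_max_right _ _⟩
  -- find a value k ≤ n² avoiding all the slaloms at coordinate n
  have hksub : ¬ (Finset.range (n^2+1) ⊆ F.biUnion (fun Z => Z n)) := by
    intro hsub'
    have h1 : (F.biUnion (fun Z => Z n)).card ≤ F.card * (n+1) := by
      calc (F.biUnion (fun Z => Z n)).card ≤ ∑ Z ∈ F, (Z n).card := Finset.card_biUnion_le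
        _ ≤ F.card * (n+1) := by
            apply Finset.sum_le_card_nsmul
            intro Z hZ
            exact hF Z hZ n
    have h2 := Finset.card_le_card hsub'
    rw [Finset.card_range] at h2
    obtain ⟨m, hm⟩ : ∃ m, n = m + F.card + 2 := ⟨n - F.card - 2, by clear hsub' h1 h2; omega⟩
    rw [hm] at h1 h2
    nlinarith [h1, h2]
  obtain ⟨k, hkmem, hk⟩ := Finset.not_subset.mp hksub
  rw [Finset.mem_range] at hkmem
  -- the target cell
  obtain ⟨Jq, hJq⟩ : ∃ j : ℤ, j = ⌊((q₀:ℝ) - Real.sqrt 2) * (mAux n : ℝ)⌋ := ⟨_, rfl⟩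
  obtain ⟨t, ht⟩ : ∃ t : ℤ, t = (k : ℤ) + ((n^2+1 : ℕ) : ℤ) * Jq := ⟨_, rfl⟩
  obtain ⟨lo, hlo⟩ : ∃ x : ℝ, x = Real.sqrt 2 + (t : ℝ) / (mAux (n+1) : ℝ) := ⟨_, rfl⟩
  obtain ⟨hi, hhi⟩ : ∃ x : ℝ, x = Real.sqrt 2 + ((t : ℝ) + 1) / (mAux (n+1) : ℝ) := ⟨_, rfl⟩
  have hMpos : (0:ℝ) < (mAux (n+1) : ℝ) := by exact_mod_cast mAux_pos (n+1)
  have hMnpos : (0:ℝ) < (mAux n : ℝ) := by exact_mod_cast mAux_pos n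
  have hlolt : lo < hi := by
    rw [hlo, hhi]
    have : (t:ℝ) / (mAux (n+1) : ℝ) < ((t:ℝ)+1) / (mAux (n+1) : ℝ) :=
      (div_lt_div_iff_of_pos_right hMpos).mpr (by linarith)
    linarith
  -- the floor of anything in the cell
  have hcellfloor : ∀ r : ℚ, lo < (r:ℝ) → (r:ℝ) < hi →
      ⌊((r:ℝ) - Real.sqrt 2) * (mAux (n+1) : ℝ)⌋ = t := by
    intro r h1 h2
    rw [Int.floor_eq_iff]
    constructor
    · have hd : (t:ℝ) / (mAux (n+1) : ℝ) < (r:ℝ) - Real.sqrt 2 := by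
        rw [hlo] at h1; linarith
      have := (div_lt_iff₀ hMpos).mp hd
      linarith
    · have hd : (r:ℝ) - Real.sqrt 2 < ((t:ℝ)+1) / (mAux (n+1) : ℝ) := by
        rw [hhi] at h2; linarith
      have := (lt_div_iff₀ hMpos).mp hd
      push_cast
      linarith
  -- the digit of any rational in the cell, at coordinate n, is k
  have hcelldig : ∀ r : ℚ, lo < (r:ℝ) → (r:ℝ) < hi → dig r n = k := by
    intro r h1 h2
    rw [dig, hcellfloor r h1 h2, ht, Int.add_mul_emod_self_left,
      Int.emod_eq_of_lt (by positivity) (by exact_mod_cast hkmem)]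
    simp
  -- the cell is inside the ball around q₀
  have hcellball : ∀ r : ℚ, lo < (r:ℝ) → (r:ℝ) < hi → dist r q₀ < ε := by
    intro r h1 h2
    obtain ⟨hA1, hA2⟩ := Int.floor_eq_iff.mp (hcellfloor r h1 h2)
    obtain ⟨a, ha⟩ : ∃ x : ℝ, x = (r:ℝ) - Real.sqrt 2 := ⟨_, rfl⟩
    obtain ⟨a0, ha0⟩ : ∃ x : ℝ, x = (q₀:ℝ) - Real.sqrt 2 := ⟨_, rfl⟩
    rw [← ha] at hA1 hA2
    rw [← ha0] at hJq
    have hq1 : (Jq:ℝ) ≤ a0 * (mAux n : ℝ) := hJq ▸ Int.floor_le _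
    have hq2 : a0 * (mAux n : ℝ) < (Jq:ℝ) + 1 := hJq ▸ Int.lt_floor_add_one _
    have hmsucc : (mAux (n+1) : ℝ) = (mAux n : ℝ) * ((n^2+1 : ℕ) : ℝ) := by
      rw [mAux_succ]; push_cast; ring
    have hBpos : (0:ℝ) < ((n^2+1 : ℕ) : ℝ) := by positivity
    have htc : (t:ℝ) = (k:ℝ) + ((n^2+1 : ℕ) : ℝ) * (Jq:ℝ) := by
      rw [ht]; push_cast; ring
    have hk1 : (k:ℝ) + 1 ≤ ((n^2+1 : ℕ) : ℝ) := by exact_mod_cast hkmem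
    have hk0 : (0:ℝ) ≤ (k:ℝ) := by positivity
    rw [hmsucc, htc] at hA1 hA2
    -- a * mAux n ∈ [Jq, Jq + 1)
    have hr1 : (Jq:ℝ) ≤ a * (mAux n : ℝ) := by nlinarith [hA1, hk0, hBpos]
    have hr2 : a * (mAux n : ℝ) < (Jq:ℝ) + 1 := by nlinarith [hA2, hk1, hBpos]
    -- hence |a - a0| < 1 / mAux n
    have habs : |a - a0| < 1 / (mAux n : ℝ) := by
      rw [abs_sub_lt_iff]
      constructor
      · rw [lt_div_iff₀ hMnpos]
        have he : (a - a0) * (mAux n : ℝ) = a * (mAux n : ℝ) - a0 * (mAux n : ℝ) := by ring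
        rw [he]; linarith
      · rw [lt_div_iff₀ hMnpos]
        have he : (a0 - a) * (mAux n : ℝ) = a0 * (mAux n : ℝ) - a * (mAux n : ℝ) := by ring
        rw [he]; linarith
    -- and 1 / mAux n < ε
    have hmn_large : ε⁻¹ < (mAux n : ℝ) := by
      have h5 : ε⁻¹ ≤ (⌈ε⁻¹⌉₊ : ℝ) := Nat.le_ceil _
      have h6 : (⌈ε⁻¹⌉₊ : ℝ) + 1 ≤ (n : ℝ) := by exact_mod_cast hn3
      have h7 : (n : ℝ) ≤ (mAux n : ℝ) := by exact_mod_cast mAux_ge n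
      linarith
    have hsmall : 1 / (mAux n : ℝ) < ε := by
      rw [div_lt_iff₀ hMnpos]
      have h8 := mul_lt_mul_of_pos_left hmn_large hε
      rw [mul_inv_cancel₀ hε.ne'] at h8
      linarith
    rw [Rat.dist_eq]
    have heq : (r:ℝ) - (q₀:ℝ) = a - a0 := by rw [ha, ha0]; ring
    rw [heq]
    linarith
  -- finitely many "short" rationals
  have hfin : {r : ℚ | Encodable.encode r + 2 ≤ n}.Finite := by
    apply Set.Finite.subset (Set.finite_range
      (fun i : Fin (n+1) => ((Encodable.decode (α := ℚ) i.val)).getD 0))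
    intro r hr
    simp only [Set.mem_setOf_eq] at hr
    refine ⟨⟨Encodable.encode r, by omega⟩, ?_⟩
    simp [Encodable.encodek]
  -- trim the cell to avoid the short rationals
  set T : Finset ℚ := hfin.toFinset.filter (fun r => (r:ℝ) < hi) with hT
  set Tr : Finset ℝ := insert lo (T.image (fun r : ℚ => (r : ℝ))) with hTr
  have hTrne : Tr.Nonempty := ⟨lo, Finset.mem_insert_self _ _⟩
  set c2 : ℝ := Tr.max' hTrne with hc2
  have hc2lo : lo ≤ c2 := Finset.le_max' _ _ (Finset.mem_insert_self _ _)
  have hc2hi : c2 < hi := by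
    rw [hc2]
    rw [Finset.max'_lt_iff]
    intro x hx
    rcases Finset.mem_insert.mp hx with h | h
    · rw [h]; exact hlolt
    · obtain ⟨r, hr, rfl⟩ := Finset.mem_image.mp h
      exact (Finset.mem_filter.mp hr).2
  have hTc2 : ∀ r ∈ T, (r:ℝ) ≤ c2 :=
    fun r hr => Finset.le_max' _ _ (Finset.mem_insert_of_mem (Finset.mem_image_of_mem _ hr))
  -- anything in the trimmed cell is not in S
  have hVS : ∀ r : ℚ, c2 < (r:ℝ) → (r:ℝ) < hi → r ∉ S := by
    intro r hrc2 hrhi hrS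
    have hrlo : lo < (r:ℝ) := lt_of_le_of_lt hc2lo hrc2
    by_cases hlen : Encodable.encode r + 2 ≤ n
    · have hrT : r ∈ T := by
        rw [hT, Finset.mem_filter]
        exact ⟨hfin.mem_toFinset.mpr hlen, hrhi⟩
      exact absurd (hTc2 r hrT) (not_le.mpr hrc2)
    · push_neg at hlen
      have hmemA : hFun r ∈ Subtype.val '' A :=
        Set.mem_image_of_mem Subtype.val hrS
      have := hsub hmemA
      rw [Set.mem_iUnion₂] at this
      obtain ⟨Z, hZF, hZmem⟩ := this
      have hdig := hZmem.2 n (by rw [hFun_length]; omega)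
      rw [hFun_getD r n hlen, hcelldig r hrlo hrhi] at hdig
      exact hk (Finset.mem_biUnion.mpr ⟨Z, hZF, hdig⟩)
  -- pick a rational in the trimmed cell
  obtain ⟨r₀, hr₀1, hr₀2⟩ := exists_rat_btwn hc2hi
  refine ⟨r₀, hball (hcellball r₀ (lt_of_le_of_lt hc2lo hr₀1) hr₀2), ?_⟩
  rw [Set.mem_compl_iff]
  intro hcl
  rw [mem_closure_iff] at hcl
  have hV : IsOpen ((Rat.cast : ℚ → ℝ) ⁻¹' Set.Ioo c2 hi) :=
    isOpen_Ioo.preimage Rat.continuous_coe_real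
  obtain ⟨r, ⟨hr1, hr2⟩, hrS⟩ := hcl _ hV ⟨hr₀1, hr₀2⟩
  exact hVS r hr1 hr2 hrS
end

section
/- Let f(n) = n². Then nwd is not Katětov below 𝓛_f: there is no function h : P_f → ℚ such that h⁻¹[A] ∈ 𝓛_f for every nowhere dense A ⊆ ℚ. -/
namespace Stmt3
open Set

/-- Coverability by `k` slaloms (tuple form). -/
def CovT (f : ℕ → ℕ) (k : ℕ) (S : Set (List ℕ)) : Prop :=
  ∃ Z : Fin k → ℕ → Finset ℕ, (∀ j, IsSlalom (Z j)) ∧ S ⊆ ⋃ j, Cf f (Z j)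

lemma covT_mono {f k} {S T : Set (List ℕ)} (hST : S ⊆ T) (h : CovT f k T) : CovT f k S := by
  obtain ⟨Z, hZ, hsub⟩ := h
  exact ⟨Z, hZ, hST.trans hsub⟩

lemma memLf_of_covT {f k} {S : Set (List ℕ)} (h : CovT f k S) : MemLf f S := by
  obtain ⟨Z, hZ, hsub⟩ := h
  classical
  refine ⟨Finset.image Z Finset.univ, ?_, ?_⟩
  · intro W hW
    obtain ⟨j, _, rfl⟩ := Finset.mem_image.mp hW
    exact hZ j
  · intro s hs
    obtain ⟨j, hj⟩ := mem_iUnion.mp (hsub hs)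
    exact mem_iUnion₂.mpr ⟨Z j, Finset.mem_image.mpr ⟨j, Finset.mem_univ _, rfl⟩, hj⟩

lemma covT_of_memLf {f} {S : Set (List ℕ)} (h : MemLf f S) : ∃ k, ∀ k', k ≤ k' → CovT f k' S := by
  classical
  obtain ⟨F, hF, hsub⟩ := h
  refine ⟨F.card, fun k' hk' => ?_⟩
  refine ⟨fun j => if hj : (j : ℕ) < F.toList.length then F.toList.get ⟨j, hj⟩ else (fun _ => ∅), ?_, ?_⟩
  · intro j
    simp only []
    split
    · next hj => exact hF _ (Finset.mem_toList.mp (F.toList.get_mem _))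
    · intro i; simp [IsSlalom]
  · intro s hs
    obtain ⟨t, htF, hst⟩ := mem_iUnion₂.mp (hsub hs)
    obtain ⟨i, hti⟩ := List.get_of_mem (Finset.mem_toList.mpr htF)
    have hi : (i : ℕ) < F.toList.length := i.isLt
    refine mem_iUnion.mpr ⟨⟨i, lt_of_lt_of_le (by simpa using hi) hk'⟩, ?_⟩
    simp only [hi, dif_pos]
    have : F.toList.get ⟨(i:ℕ), hi⟩ = t := by cases i; exact hti
    rw [this]; exact hst

lemma memLf_mono {f} {S T : Set (List ℕ)} (hST : S ⊆ T) (h : MemLf f T) : MemLf f S := by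
  obtain ⟨F, hF, hsub⟩ := h; exact ⟨F, hF, hST.trans hsub⟩

lemma memLf_union {f} {S T : Set (List ℕ)} (hS : MemLf f S) (hT : MemLf f T) :
    MemLf f (S ∪ T) := by
  classical
  obtain ⟨F, hF, hFs⟩ := hS
  obtain ⟨G, hG, hGs⟩ := hT
  refine ⟨F ∪ G, ?_, ?_⟩
  · intro Z hZ
    rcases Finset.mem_union.mp hZ with h | h
    · exact hF _ h
    · exact hG _ h
  · rintro s (hs | hs)
    · obtain ⟨Z, hZF, hsZ⟩ := mem_iUnion₂.mp (hFs hs)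
      exact mem_iUnion₂.mpr ⟨Z, Finset.mem_union_left _ hZF, hsZ⟩
    · obtain ⟨Z, hZG, hsZ⟩ := mem_iUnion₂.mp (hGs hs)
      exact mem_iUnion₂.mpr ⟨Z, Finset.mem_union_right _ hZG, hsZ⟩

/-- The whole space `P_f` is not in `𝓛_f` for `f n = n²`. -/
lemma not_memLf_Pf : ¬ MemLf (fun n => n ^ 2) (Pf (fun n => n ^ 2)) := by
  classical
  rintro ⟨F, hF, hsub⟩
  set k := F.card with hk
  set n := k + 2 with hn
  -- the union of the slaloms at level n misses some m ≤ n^2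
  have hcard : (F.biUnion (fun Z => Z n)).card < (Finset.range (n ^ 2 + 1)).card := by
    calc (F.biUnion (fun Z => Z n)).card ≤ ∑ Z ∈ F, (Z n).card := Finset.card_biUnion_le
      _ ≤ ∑ _Z ∈ F, (n + 1) := Finset.sum_le_sum (fun Z hZ => hF Z hZ n)
      _ = k * (n + 1) := by simp [hk, mul_comm]
      _ < n ^ 2 + 1 := by nlinarith [hn]
      _ = (Finset.range (n ^ 2 + 1)).card := by simp
  have hns : ¬ (Finset.range (n ^ 2 + 1) ⊆ F.biUnion (fun Z => Z n)) :=
    fun hsub' => absurd (Finset.card_le_card hsub') (not_le.mpr hcard)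
  obtain ⟨m, hmr, hmU⟩ := Finset.not_subset.mp hns
  -- the witness sequence
  set s : List ℕ := List.replicate n 0 ++ [m] with hs
  have hlen : s.length = n + 1 := by simp [hs]
  have hget : ∀ i, i < n → s.getD i 0 = 0 := by
    intro i hi
    rw [hs, List.getD_append _ _ _ _ (by simpa using hi)]
    simp [List.getD_eq_getElem?_getD, List.getElem?_replicate, hi]
  have hgetn : s.getD n 0 = m := by
    rw [hs, List.getD_append_right _ _ _ _ (by simp)]
    simp
  have hsPf : s ∈ Pf (fun n => n ^ 2) := by
    intro i hi
    rw [hlen] at hi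
    rcases Nat.lt_succ_iff_lt_or_eq.mp hi with hi' | rfl
    · rw [hget i hi']; positivity
    · rw [hgetn]; simpa using Nat.lt_succ_iff.mp (Finset.mem_range.mp hmr)
  obtain ⟨Z, hZF, hsZ⟩ := mem_iUnion₂.mp (hsub hsPf)
  obtain ⟨-, hall⟩ := hsZ
  have hnlt : n < s.length := by simp [hlen]
  have hmem := hall n hnlt
  rw [hgetn] at hmem
  exact hmU (Finset.mem_biUnion.mpr ⟨Z, hZF, hmem⟩)

variable {f : ℕ → ℕ}

/-- Preimage of `S ⊆ ℚ` under `h`, as a set of lists. -/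
def pre (h : ↥(Pf f) → ℚ) (S : Set ℚ) : Set (List ℕ) := Subtype.val '' (h ⁻¹' S)

lemma pre_mono (h : ↥(Pf f) → ℚ) {S T : Set ℚ} (hST : S ⊆ T) : pre h S ⊆ pre h T :=
  Set.image_mono (Set.preimage_mono hST)

lemma pre_union (h : ↥(Pf f) → ℚ) (S T : Set ℚ) : pre h (S ∪ T) = pre h S ∪ pre h T := by
  simp [pre, Set.preimage_union, Set.image_union]

lemma pre_univ (h : ↥(Pf f) → ℚ) : pre h Set.univ = Pf f := by
  simp [pre, Subtype.range_val]

lemma pre_subset_Pf (h : ↥(Pf f) → ℚ) (S : Set ℚ) : pre h S ⊆ Pf f := by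
  rintro s ⟨x, -, rfl⟩; exact x.2

/-- Ultrafilter limit of a finite-range function. -/
lemma ultrafilter_limit {α : Type*} (U : Ultrafilter ℕ) (g : ℕ → α)
    (hg : (Set.range g).Finite) : ∃ a, {n | g n = a} ∈ U := by
  have hmem : Set.range g ∈ Ultrafilter.map g U :=
    Ultrafilter.mem_map.mpr (by rw [Set.preimage_range]; exact Filter.univ_mem)
  obtain ⟨a, -, hpure⟩ := Ultrafilter.eq_pure_of_finite_mem hg hmem
  refine ⟨a, ?_⟩
  have : {a} ∈ Ultrafilter.map g U := by rw [hpure]; exact Filter.mem_pure.mpr rfl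
  have := Ultrafilter.mem_map.mp this
  simpa [Set.preimage, Set.mem_singleton_iff] using this


/-- Compactness: if every finite subset of `S` has `k`-coverable preimage, so does `S`. -/
lemma covT_compactness (h : ↥(Pf f) → ℚ) (k : ℕ) (S : Set ℚ)
    (hW : ∀ W : Finset ℚ, ↑W ⊆ S → CovT f k (pre h ↑W)) : CovT f k (pre h S) := by
  classical
  obtain ⟨q, hq⟩ := exists_surjective_nat ℚ
  -- increasing finite approximations to S
  set Wn : ℕ → Finset ℚ := fun n => ((Finset.range n).image q).filter (· ∈ S) with hWn
  have hWnS : ∀ n, ↑(Wn n) ⊆ S := by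
    intro n x hx
    exact (Finset.mem_filter.mp hx).2
  -- choose covers and restrict their values
  have hcov : ∀ n, CovT f k (pre h ↑(Wn n)) := fun n => hW _ (hWnS n)
  set Z : ℕ → Fin k → ℕ → Finset ℕ :=
    fun n j i => ((hcov n).choose j i) ∩ Finset.range (f i + 1) with hZ
  have hZslalom : ∀ n j, IsSlalom (Z n j) := by
    intro n j i
    exact le_trans (Finset.card_le_card Finset.inter_subset_left) ((hcov n).choose_spec.1 j i)
  have hZcov : ∀ n, pre h ↑(Wn n) ⊆ ⋃ j, Cf f (Z n j) := by
    intro n s hs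
    obtain ⟨j, hPf', hall⟩ := Set.mem_iUnion.mp ((hcov n).choose_spec.2 hs)
    refine Set.mem_iUnion.mpr ⟨j, hPf', fun i hi => Finset.mem_inter.mpr ⟨hall i hi, ?_⟩⟩
    exact Finset.mem_range.mpr (Nat.lt_succ_of_le (hPf' i hi))
  -- ultrafilter limit
  set U : Ultrafilter ℕ := Filter.hyperfilter ℕ with hU
  have hfin : ∀ j i, (Set.range (fun n => Z n j i)).Finite := by
    intro j i
    refine Set.Finite.subset (Finset.finite_toSet ((Finset.range (f i + 1)).powerset)) ?_
    rintro t ⟨n, rfl⟩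
    simp only [Finset.mem_coe, Finset.mem_powerset, hZ]
    exact Finset.inter_subset_right
  set Zl : Fin k → ℕ → Finset ℕ :=
    fun j i => (ultrafilter_limit U (fun n => Z n j i) (hfin j i)).choose with hZl
  have hZlU : ∀ j i, {n | Z n j i = Zl j i} ∈ U :=
    fun j i => (ultrafilter_limit U (fun n => Z n j i) (hfin j i)).choose_spec
  refine ⟨Zl, ?_, ?_⟩
  · intro j i
    obtain ⟨n, hn⟩ := Ultrafilter.nonempty_of_mem (hZlU j i)
    rw [← hn]
    exact hZslalom n j i
  · -- coverage
    rintro s hsS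
    obtain ⟨x, hxS, rfl⟩ := hsS
    obtain ⟨n₀, hqn₀⟩ := hq (h x)
    have hsWn : ∀ n, n₀ < n → (x : List ℕ) ∈ pre h ↑(Wn n) := by
      intro n hn
      refine ⟨x, ?_, rfl⟩
      simp only [hWn, Set.mem_preimage, Finset.coe_filter, Set.mem_setOf_eq, Finset.mem_image]
      exact ⟨⟨n₀, Finset.mem_range.mpr hn, hqn₀⟩, hxS⟩
    have hUnion : {n | n₀ < n} ⊆ ⋃ j, {n | (x : List ℕ) ∈ Cf f (Z n j)} := by
      intro n hn
      obtain ⟨j, hj⟩ := Set.mem_iUnion.mp (hZcov n (hsWn n hn))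
      exact Set.mem_iUnion.mpr ⟨j, hj⟩
    have hUm : (⋃ j, {n | (x : List ℕ) ∈ Cf f (Z n j)}) ∈ U :=
      Filter.mem_of_superset (Filter.mem_hyperfilter_of_finite_compl (by
        have : {n | n₀ < n}ᶜ = {n | n ≤ n₀} := by ext n; simp [not_lt]
        rw [this]; exact Set.finite_le_nat n₀)) hUnion
    have : (⋃ j ∈ (Set.univ : Set (Fin k)), {n | (x : List ℕ) ∈ Cf f (Z n j)}) ∈ U := by
      simpa using hUm
    obtain ⟨j, -, hjU⟩ := (Ultrafilter.finite_biUnion_mem_iff Set.finite_univ).mp this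
    refine Set.mem_iUnion.mpr ⟨j, x.2, fun i hi => ?_⟩
    have hT : ({n | (x : List ℕ) ∈ Cf f (Z n j)} ∩ {n | Z n j i = Zl j i}) ∈ U :=
      Filter.inter_mem hjU (hZlU j i)
    obtain ⟨n, hn1, hn2⟩ := Ultrafilter.nonempty_of_mem hT
    rw [← hn2]
    exact hn1.2 i hi

lemma step_lemma (h : ↥(Pf f) → ℚ) (R : Set ℚ) (hR : ¬ MemLf f (pre h Rᶜ))
    (a b : ℚ) (hab : a < b) :
    ∃ c d : ℚ, a < c ∧ c < d ∧ d < b ∧ ¬ MemLf f (pre h (R ∪ Set.Icc c d)ᶜ) := by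
  obtain ⟨c₁, hac₁, hc₁b⟩ := exists_between hab
  obtain ⟨d₁, hc₁d₁, hd₁b⟩ := exists_between hc₁b
  obtain ⟨c₂, hd₁c₂, hc₂b⟩ := exists_between hd₁b
  obtain ⟨d₂, hc₂d₂, hd₂b⟩ := exists_between hc₂b
  by_contra hcon
  push_neg at hcon
  have h₁ := hcon c₁ d₁ hac₁ hc₁d₁ (hd₁c₂.trans (hc₂d₂.trans hd₂b))
  have h₂ := hcon c₂ d₂ (hac₁.trans (hc₁d₁.trans hd₁c₂)) hc₂d₂ hd₂b
  apply hR
  have hsub : Rᶜ ⊆ (R ∪ Set.Icc c₁ d₁)ᶜ ∪ (R ∪ Set.Icc c₂ d₂)ᶜ := by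
    intro x hx
    simp only [Set.mem_union, Set.mem_compl_iff, Set.mem_union, not_or] at *
    by_cases h1 : x ∈ Set.Icc c₁ d₁
    · right
      refine ⟨hx, fun h2 => ?_⟩
      exact absurd (h1.2.trans_lt (hd₁c₂.trans_le h2.1)) (lt_irrefl x)
    · left; exact ⟨hx, h1⟩
  exact memLf_mono ((pre_mono h hsub).trans (le_of_eq (pre_union h _ _))) (memLf_union h₁ h₂)

lemma exists_witness (h : ↥(Pf f) → ℚ) (R : Set ℚ) (hR : ¬ MemLf f (pre h Rᶜ)) (k : ℕ) :
    ∃ W : Finset ℚ, ↑W ⊆ Rᶜ ∧ ¬ CovT f k (pre h ↑W) := by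
  by_contra hcon
  push_neg at hcon
  exact hR (memLf_of_covT (covT_compactness h k Rᶜ hcon))

end Stmt3

open Stmt3

/-- For `f n = n²`, `nwd` is not Katětov below `𝓛_f`: there is no `h : P_f → ℚ`
with `h⁻¹[A] ∈ 𝓛_f` for every nowhere dense `A ⊆ ℚ`. -/
theorem stmt3 : ¬ KatLe nwdIdeal (LfIdeal (fun n => n ^ 2)) := by
  classical
  rintro ⟨h, hKat⟩
  obtain ⟨e, he⟩ := exists_surjective_nat (ℚ × ℚ)
  have hbase : ¬ MemLf (fun n => n ^ 2) (pre h (∅ : Set ℚ)ᶜ) := by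
    rw [Set.compl_empty, pre_univ]; exact not_memLf_Pf
  have hstep : ∀ k : ℕ, ∀ R : Set ℚ, ¬ MemLf (fun n => n ^ 2) (pre h Rᶜ) →
      ∃ R' : Set ℚ, R ⊆ R' ∧ ¬ MemLf (fun n => n ^ 2) (pre h R'ᶜ) ∧
        ∀ a b : ℚ, e k = (a, b) → a < b →
          ∃ c d : ℚ, a < c ∧ c < d ∧ d < b ∧ Set.Icc c d ⊆ R' := by
    intro k R hR
    by_cases hab : (e k).1 < (e k).2
    · obtain ⟨c, d, h1, h2, h3, h4⟩ := step_lemma h R hR (e k).1 (e k).2 hab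
      refine ⟨R ∪ Set.Icc c d, Set.subset_union_left, h4, fun a b hek hab' => ?_⟩
      rw [hek] at h1 h3
      exact ⟨c, d, h1, h2, h3, Set.subset_union_right⟩
    · refine ⟨R, subset_rfl, hR, fun a b hek hab' => absurd ?_ hab⟩
      rw [hek]; exact hab'
  choose R' hsub' hinv' hint' using hstep
  let g : ℕ → {R : Set ℚ // ¬ MemLf (fun n => n ^ 2) (pre h Rᶜ)} := fun k =>
    Nat.rec ⟨∅, hbase⟩ (fun k ih => ⟨R' k ih.1 ih.2, hinv' k ih.1 ih.2⟩) k
  have hRinv : ∀ k, ¬ MemLf (fun n => n ^ 2) (pre h ((g k).1)ᶜ) := fun k => (g k).2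
  have hRmono : ∀ k, (g k).1 ⊆ (g (k+1)).1 := fun k => hsub' k (g k).1 (g k).2
  have hRmono' : ∀ k j, k ≤ j → (g k).1 ⊆ (g j).1 := by
    intro k j hkj
    induction j with
    | zero => rw [Nat.le_zero.mp hkj]
    | succ j ih =>
      rcases Nat.le_succ_iff.mp hkj with hkj' | rfl
      · exact (ih hkj').trans (hRmono j)
      · exact subset_rfl
  have hRint : ∀ k a b, e k = (a, b) → a < b →
      ∃ c d, a < c ∧ c < d ∧ d < b ∧ Set.Icc c d ⊆ (g (k+1)).1 :=
    fun k => hint' k (g k).1 (g k).2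
  choose W hWsub hWcov using fun k => exists_witness h (g k).1 (hRinv k) k
  set A : Set ℚ := ⋃ k, (↑(W k) : Set ℚ) with hA
  have hAnwd : IsNowhereDense A := by
    rw [IsNowhereDense, Set.eq_empty_iff_forall_notMem]
    intro x hx
    have hnb : closure A ∈ nhds x := mem_interior_iff_mem_nhds.mp hx
    obtain ⟨a, b, hxab, habsub⟩ := mem_nhds_iff_exists_Ioo_subset.mp hnb
    have hab : a < b := hxab.1.trans hxab.2
    obtain ⟨k, hek⟩ := he (a, b)
    obtain ⟨c, d, hac, hcd, hdb, hIcc⟩ := hRint k a b hek hab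
    have hGfin : (⋃ j ∈ Finset.range (k+1), (↑(W j) : Set ℚ)).Finite :=
      Set.Finite.biUnion (Finset.finite_toSet _) (fun j _ => Finset.finite_toSet _)
    set G := ⋃ j ∈ Finset.range (k+1), (↑(W j) : Set ℚ) with hG
    have hsplitA : A ∩ Set.Ioo c d ⊆ G := by
      rintro y ⟨hyA, hyI⟩
      obtain ⟨j, hj⟩ := Set.mem_iUnion.mp hyA
      by_cases hjk : j ≤ k
      · exact Set.mem_biUnion (Finset.mem_range.mpr (Nat.lt_succ_of_le hjk)) hj
      · exfalso
        apply hWsub j hj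
        exact hRmono' (k+1) j (by omega) (hIcc ⟨hyI.1.le, hyI.2.le⟩)
    have hclosure : Set.Ioo c d ⊆ G := by
      intro y hy
      have hyA : y ∈ closure A := habsub ⟨hac.trans hy.1, hy.2.trans hdb⟩
      have hdecomp : closure A ⊆ closure (A ∩ Set.Ioo c d) ∪ closure (A \ Set.Ioo c d) := by
        rw [← closure_union]
        apply closure_mono
        intro z hz
        by_cases hzI : z ∈ Set.Ioo c d
        · exact Or.inl ⟨hz, hzI⟩
        · exact Or.inr ⟨hz, hzI⟩
      rcases hdecomp hyA with h1 | h2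
      · exact closure_minimal hsplitA hGfin.isClosed h1
      · exact absurd hy (closure_minimal (fun z hz => hz.2) isOpen_Ioo.isClosed_compl h2)
    exact (Set.Ioo_infinite hcd) (hGfin.subset hclosure)
  have hmem' : MemLf (fun n => n ^ 2) (pre h A) := hKat A hAnwd
  obtain ⟨k₁, hk₁⟩ := covT_of_memLf hmem'
  exact hWcov k₁ (covT_mono
    (pre_mono h (Set.subset_iUnion (fun k => (↑(W k) : Set ℚ)) k₁)) (hk₁ k₁ le_rfl))
end

section
/- Let f(n) = n². For every X ⊆ Y: X ∉ 𝓛_f if and only if for every n < ω there exists m < ω such that the set {s(m) : s ∈ X and m < |s|} has more than n·(m+1) elements. -/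
/-- The set `Y ⊆ P_f` (for `f n = n²`): nonempty sequences that are `0` except
possibly at the last coordinate, whose last value is at most `|s|·(|s|−3)`. -/
def Yset : Set (List ℕ) :=
  {s | s ∈ Pf (fun n => n ^ 2) ∧ s ≠ [] ∧
    (∀ i < s.length - 1, s.getD i 0 = 0) ∧
    s.getD (s.length - 1) 0 ≤ s.length * (s.length - 3)}

open Classical in
noncomputable def Vfin (X : Set (List ℕ)) (m : ℕ) : Finset ℕ :=
  (Finset.range (m ^ 2 + 1)).filter (fun k => ∃ s ∈ X, m < s.length ∧ s.getD m 0 = k)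

lemma Vset_eq (X : Set (List ℕ)) (hP : ∀ s ∈ X, s ∈ Pf (fun n => n ^ 2)) (m : ℕ) :
    {k : ℕ | ∃ s ∈ X, m < s.length ∧ s.getD m 0 = k} = ↑(Vfin X m) := by
  ext k
  simp only [Set.mem_setOf_eq, Vfin, Finset.coe_filter, Finset.mem_range, Nat.lt_succ_iff]
  constructor
  · rintro ⟨s, hs, hm, rfl⟩
    exact ⟨hP s hs m hm, s, hs, hm, rfl⟩
  · rintro ⟨-, h⟩
    exact h

noncomputable def Zfun (X : Set (List ℕ)) (j m : ℕ) : Finset ℕ :=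
  insert 0 (((((Vfin X m).erase 0).sort (· ≤ ·)).drop (j * m)).take m).toFinset

lemma Zfun_slalom (X : Set (List ℕ)) (j : ℕ) : IsSlalom (Zfun X j) := by
  intro m
  calc (Zfun X j m).card
      ≤ (((((Vfin X m).erase 0).sort (· ≤ ·)).drop (j * m)).take m).toFinset.card + 1 :=
        Finset.card_insert_le _ _
    _ ≤ (((((Vfin X m).erase 0).sort (· ≤ ·)).drop (j * m)).take m).length + 1 := by
        exact Nat.add_le_add_right (List.toFinset_card_le _) 1
    _ ≤ m + 1 := Nat.add_le_add_right (List.length_take_le _ _) 1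


/-- For `f n = n²` and `X ⊆ Y`: `X ∉ 𝓛_f` iff for every `n` there is `m` such
that `{s m : s ∈ X, m < |s|}` has more than `n·(m+1)` elements. -/
theorem stmt6 (X : Set (List ℕ)) (hX : X ⊆ Yset) :
    ¬ MemLf (fun n => n ^ 2) X ↔
      ∀ n : ℕ, ∃ m : ℕ,
        n * (m + 1) < {k : ℕ | ∃ s ∈ X, m < s.length ∧ s.getD m 0 = k}.ncard := by
  classical
  have hP : ∀ s ∈ X, s ∈ Pf (fun n => n ^ 2) := fun s hs => (hX hs).1
  constructor
  · -- ¬ MemLf → ∀ n ∃ m big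
    intro hne
    by_contra hcon
    push_neg at hcon
    obtain ⟨n, hn⟩ := hcon
    apply hne
    -- bound on Vfin card
    have hV : ∀ m, (Vfin X m).card ≤ n * (m + 1) := by
      intro m
      have := hn m
      rwa [Vset_eq X hP m, Set.ncard_coe_finset] at this
    refine ⟨(Finset.range (2 * n + 1)).image (Zfun X), ?_, ?_⟩
    · intro Z hZ
      simp only [Finset.mem_image] at hZ
      obtain ⟨j, -, rfl⟩ := hZ
      exact Zfun_slalom X j
    · intro s hs
      obtain ⟨hsP, hsne, hz, hlast⟩ := hX hs
      set m := s.length - 1 with hm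
      have hlen : s.length = m + 1 := by
        have := List.length_pos_iff.mpr hsne
        omega
      set v := s.getD m 0 with hv
      -- find j such that v ∈ Zfun X j m
      have key : ∃ j < 2 * n + 1, v ∈ Zfun X j m := by
        by_cases hv0 : v = 0
        · exact ⟨0, by omega, by rw [hv0]; exact Finset.mem_insert_self _ _⟩
        · -- v ∈ (Vfin X m).erase 0
          have hm1 : 1 ≤ m := by
            by_contra hm0
            have hm0 : m = 0 := by omega
            have : v ≤ s.length * (s.length - 3) := hlast
            rw [hlen, hm0] at this
            simp at this
            omega
          have hvV : v ∈ (Vfin X m).erase 0 := by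
            refine Finset.mem_erase.mpr ⟨hv0, ?_⟩
            simp only [Vfin, Finset.mem_filter, Finset.mem_range, Nat.lt_succ_iff]
            exact ⟨hsP m (by omega), s, hs, by omega, rfl⟩
          set l := ((Vfin X m).erase 0).sort (· ≤ ·) with hl
          have hvl : v ∈ l := (Finset.mem_sort _).mpr hvV
          set i := l.idxOf v with hi
          have hil : i < l.length := List.idxOf_lt_length_iff.mpr hvl
          have hcard : l.length ≤ m * (2 * n + 1) := by
            have h1 : l.length = ((Vfin X m).erase 0).card := Finset.length_sort _
            have h2 : ((Vfin X m).erase 0).card ≤ (Vfin X m).card :=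
              Finset.card_erase_le
            have h3 := hV m
            nlinarith
          obtain ⟨j, r, hrm, hjr, hjlt⟩ :
              ∃ j r, r < m ∧ j * m + r = i ∧ j < 2 * n + 1 := by
            refine ⟨i / m, i % m, Nat.mod_lt _ (by omega), Nat.div_add_mod' i m, ?_⟩
            exact Nat.div_lt_of_lt_mul (lt_of_lt_of_le hil hcard)
          refine ⟨j, hjlt, ?_⟩
          refine Finset.mem_insert_of_mem ?_
          rw [List.mem_toFinset]
          refine List.mem_iff_getElem.mpr ⟨r, ?_, ?_⟩
          · rw [List.length_take, List.length_drop]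
            refine Nat.lt_min.mpr ⟨hrm, Nat.lt_sub_of_add_lt ?_⟩
            rw [Nat.add_comm, hjr]
            exact hil
          · rw [List.getElem_take, List.getElem_drop]
            simp only [hjr]
            exact List.getElem_idxOf hil
      obtain ⟨j, hj, hjv⟩ := key
      refine Set.mem_biUnion (Finset.mem_coe.mpr (Finset.mem_image_of_mem _ (Finset.mem_range.mpr hj))) ?_
      refine ⟨hsP, ?_⟩
      intro i hi
      rcases Nat.lt_or_ge i m with h | h
      · rw [hz i (by omega)]
        exact Finset.mem_insert_self _ _
      · have : i = m := by omega
        rw [this]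
        exact hjv
  · rintro h ⟨F, hsl, hcov⟩
    obtain ⟨m, hm⟩ := h F.card
    set B : Finset ℕ := F.biUnion (fun Z => Z m) with hB
    have hsub : {k : ℕ | ∃ s ∈ X, m < s.length ∧ s.getD m 0 = k} ⊆ ↑B := by
      rintro k ⟨s, hs, hms, rfl⟩
      have := hcov hs
      simp only [Set.mem_iUnion] at this
      obtain ⟨Z, hZF, -, hZ⟩ := this
      exact Finset.mem_coe.mpr (Finset.mem_biUnion.mpr ⟨Z, hZF, hZ m hms⟩)
    have h1 : {k : ℕ | ∃ s ∈ X, m < s.length ∧ s.getD m 0 = k}.ncard ≤ B.card := by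
      rw [← Set.ncard_coe_finset]
      exact Set.ncard_le_ncard hsub (Finset.finite_toSet B)
    have h2 : B.card ≤ F.card * (m + 1) := by
      calc B.card ≤ ∑ Z ∈ F, (Z m).card := Finset.card_biUnion_le
        _ ≤ F.card * (m + 1) := Finset.sum_le_card_nsmul _ _ _ (fun Z hZ => hsl Z hZ m)
    omega
end

section
/- Let f(n) = n². For every X ⊆ Y with X ∉ 𝓛_f, nwd is not Katětov below 𝓛_f↾X: there is no function h : X → ℚ such that h⁻¹[A] ∈ 𝓛_f for every nowhere dense A ⊆ ℚ. -/
set_option maxHeartbeats 1000000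


/-- The restriction `𝓛_f ↾ X` as a family of subsets of `X`. -/
def LfRestrict (f : ℕ → ℕ) (X : Set (List ℕ)) : Set (Set X) :=
  {A | MemLf f (Subtype.val '' A)}

section Aux
open Set

def mkS (i m : ℕ) : List ℕ := List.replicate i 0 ++ [m]

@[simp] lemma mkS_length (i m : ℕ) : (mkS i m).length = i + 1 := by
  simp [mkS]

lemma mkS_getD_lt (i m j : ℕ) (hj : j < i) : (mkS i m).getD j 0 = 0 := by
  rw [List.getD_eq_getElem _ _ (by simp; omega)]
  simp only [mkS]
  rw [List.getElem_append_left (by simpa using hj), List.getElem_replicate]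

@[simp] lemma mkS_getD_self (i m : ℕ) : (mkS i m).getD i 0 = m := by
  rw [List.getD_eq_getElem _ _ (by simp)]
  simp only [mkS]
  rw [List.getElem_append_right (by simp)]
  simp

lemma yset_eq {s : List ℕ} (hs : s ∈ Yset) :
    s = mkS (s.length - 1) (s.getD (s.length - 1) 0) := by
  obtain ⟨hpf, hne, hzero, _⟩ := hs
  have hlen : s.length ≠ 0 := by simpa using hne
  apply List.ext_getElem (by simp; omega)
  intro j hj hj'
  rcases Nat.lt_or_ge j (s.length - 1) with hlt | hge
  · rw [← List.getD_eq_getElem s 0 hj, hzero j hlt]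
    simp only [mkS]
    rw [List.getElem_append_left (by simpa using hlt), List.getElem_replicate]
  · have hje : j = s.length - 1 := by omega
    subst hje
    rw [← List.getD_eq_getElem s 0 hj]
    simp only [mkS]
    rw [List.getElem_append_right (by simp)]
    simp

open Classical in
noncomputable def cnt (B : Set (List ℕ)) (i : ℕ) : ℕ :=
  ((Finset.range (i ^ 2 + 1)).filter (fun m => mkS i m ∈ B)).card

lemma cnt_mono {B B' : Set (List ℕ)} (h : B ⊆ B') (i : ℕ) : cnt B i ≤ cnt B' i := by
  classical
  apply Finset.card_le_card
  intro m hm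
  simp only [Finset.mem_filter] at *
  exact ⟨hm.1, h hm.2⟩

lemma memLf_mono {f : ℕ → ℕ} {A B : Set (List ℕ)} (h : A ⊆ B) (hB : MemLf f B) :
    MemLf f A := by
  obtain ⟨F, h1, h2⟩ := hB
  exact ⟨F, h1, h.trans h2⟩

lemma memLf_union {f : ℕ → ℕ} {A B : Set (List ℕ)} (hA : MemLf f A) (hB : MemLf f B) :
    MemLf f (A ∪ B) := by
  classical
  obtain ⟨F, hF1, hF2⟩ := hA
  obtain ⟨G, hG1, hG2⟩ := hB
  refine ⟨F ∪ G, ?_, ?_⟩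
  · intro Z hZ
    rcases Finset.mem_union.1 hZ with h | h
    · exact hF1 Z h
    · exact hG1 Z h
  · rintro s (hs | hs)
    · obtain ⟨t, ht⟩ := Set.mem_iUnion.1 (hF2 hs)
      obtain ⟨ht1, ht2⟩ := Set.mem_iUnion.1 ht
      exact Set.mem_iUnion₂.2 ⟨t, Finset.mem_union_left _ ht1, ht2⟩
    · obtain ⟨t, ht⟩ := Set.mem_iUnion.1 (hG2 hs)
      obtain ⟨ht1, ht2⟩ := Set.mem_iUnion.1 ht
      exact Set.mem_iUnion₂.2 ⟨t, Finset.mem_union_right _ ht1, ht2⟩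

lemma memLf_empty (f : ℕ → ℕ) : MemLf f ∅ := ⟨∅, by simp, by simp⟩

/-- Lemma A: covered sets have small level counts. -/
lemma cnt_le_of_memLf {f : ℕ → ℕ} {B : Set (List ℕ)} (hB : MemLf f B) :
    ∃ k : ℕ, ∀ i, cnt B i ≤ k * (i + 1) := by
  classical
  obtain ⟨F, hF1, hF2⟩ := hB
  refine ⟨F.card, fun i => ?_⟩
  have hsub : ((Finset.range (i ^ 2 + 1)).filter (fun m => mkS i m ∈ B)) ⊆
      F.biUnion (fun Z => (Z i) ∩ Finset.range (i ^ 2 + 1)) := by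
    intro m hm
    rw [Finset.mem_filter] at hm
    obtain ⟨hm1, hm2⟩ := hm
    obtain ⟨t, ht⟩ := Set.mem_iUnion.1 (hF2 hm2)
    obtain ⟨ht1, ht2⟩ := Set.mem_iUnion.1 ht
    refine Finset.mem_biUnion.2 ⟨t, ht1, Finset.mem_inter.2 ⟨?_, hm1⟩⟩
    have := ht2.2 i (by simp)
    rwa [mkS_getD_self] at this
  calc cnt B i ≤ (F.biUnion (fun Z => (Z i) ∩ Finset.range (i ^ 2 + 1))).card :=
        Finset.card_le_card hsub
    _ ≤ ∑ Z ∈ F, ((Z i) ∩ Finset.range (i ^ 2 + 1)).card := Finset.card_biUnion_le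
    _ ≤ ∑ Z ∈ F, (i + 1) := by
        apply Finset.sum_le_sum
        intro Z hZ
        exact le_trans (Finset.card_le_card (Finset.inter_subset_left)) (hF1 Z hZ i)
    _ = F.card * (i + 1) := by rw [Finset.sum_const, smul_eq_mul]

/-- Lemma B: subsets of `Yset` with linear level counts are in the ideal. -/
lemma memLf_of_cnt {B : Set (List ℕ)} (hB : B ⊆ Yset) {k : ℕ}
    (hc : ∀ i, cnt B i ≤ k * (i + 1)) : MemLf (fun n => n ^ 2) B := by
  classical
  set K := 2 * k + 2 with hK
  set V : ℕ → Finset ℕ :=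
    fun i => (Finset.range (i ^ 2 + 1)).filter (fun m => mkS i m ∈ B) with hV
  set ℓ : ℕ → List ℕ := fun i => (V i).sort (· ≤ ·) with hℓ
  have hlen : ∀ i, (ℓ i).length = cnt B i := by
    intro i
    simp only [hℓ, Finset.length_sort]
    rfl
  set Z : ℕ → ℕ → Finset ℕ :=
    fun j i => insert 0 (((ℓ i).drop (j * i)).take i).toFinset with hZ
  have hslalom : ∀ j, IsSlalom (Z j) := by
    intro j i
    calc (Z j i).card ≤ (((ℓ i).drop (j * i)).take i).toFinset.card + 1 :=
          Finset.card_insert_le _ _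
      _ ≤ (((ℓ i).drop (j * i)).take i).length + 1 :=
          Nat.add_le_add_right (((ℓ i).drop (j * i)).take i).toFinset_card_le 1
      _ ≤ i + 1 := by
          have := List.length_take_le i ((ℓ i).drop (j * i))
          omega
  refine ⟨(Finset.range K).image Z, ?_, ?_⟩
  · intro W hW
    obtain ⟨j, _, rfl⟩ := Finset.mem_image.1 hW
    exact hslalom j
  · intro s hs
    have hsY := hB hs
    have hne : s.length ≠ 0 := by
      have := hsY.2.1; simpa using this
    set i := s.length - 1 with hi
    set m := s.getD i 0 with hm
    have hseq : s = mkS i m := yset_eq hsY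
    have hmV : m ∈ V i := by
      simp only [hV, Finset.mem_filter, Finset.mem_range]
      constructor
      · have := hsY.1 i (by omega)
        simp only [← hm] at this
        omega
      · rwa [← hseq]
    have hmem : m ∈ ℓ i := by
      simp only [hℓ]
      rwa [Finset.mem_sort]
    obtain ⟨t, ht, htm⟩ := List.getElem_of_mem hmem
    -- find the right block index j
    have htlen : t < k * (i + 1) := lt_of_lt_of_le (by rw [hlen] at ht; exact ht) (hc i)
    -- choose j
    rcases Nat.eq_zero_or_pos i with hi0 | hipos
    · -- i = 0 : m = 0
      refine Set.mem_iUnion₂.2 ⟨Z 0, Finset.mem_image.2 ⟨0, Finset.mem_range.2 (by omega), rfl⟩,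
        ⟨hsY.1, ?_⟩⟩
      intro i' hi'
      have hii : i' = 0 := by omega
      have hm0 : m = 0 := by
        have h2 := Finset.mem_range.1 (Finset.mem_filter.1 hmV).1
        rw [hi0] at h2
        simpa using Nat.lt_one_iff.1 (by simpa using h2)
      subst hii
      have hgd : s.getD 0 0 = m := by rw [hm, hi0]
      rw [hgd, hm0]
      exact Finset.mem_insert_self 0 _
    · have hjlt : t / i < K := by
        have h1 : t < i * K := by nlinarith
        exact Nat.div_lt_of_lt_mul h1
      set j := t / i with hj
      have hidx1 : t % i < i := Nat.mod_lt _ hipos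
      have hidx2 : j * i + t % i = t := by
        have h2 := Nat.div_add_mod t i
        calc j * i + t % i = i * (t / i) + t % i := by rw [hj, Nat.mul_comm]
          _ = t := h2
      have hmblock : m ∈ (((ℓ i).drop (j * i)).take i).toFinset := by
        rw [List.mem_toFinset]
        refine List.mem_iff_getElem.2 ⟨t % i, ?_, ?_⟩
        · rw [List.length_take, List.length_drop]
          refine lt_min hidx1 ?_
          omega
        · rw [List.getElem_take, List.getElem_drop]
          simp only [hidx2]
          exact htm
      refine Set.mem_iUnion₂.2 ⟨Z j, Finset.mem_image.2 ⟨j, Finset.mem_range.2 hjlt, rfl⟩, ?_⟩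
      refine ⟨hsY.1, ?_⟩
      intro i' hi'
      rcases Nat.lt_or_ge i' i with hlt | hge
      · have : s.getD i' 0 = 0 := hsY.2.2.1 i' (by omega)
        rw [this]
        exact Finset.mem_insert_self 0 _
      · have : i' = i := by omega
        subst this
        rw [← hm]
        exact Finset.mem_insert_of_mem hmblock

/-- level sets of `Yset` are finite -/
lemma levelFinite (i : ℕ) : Set.Finite {s | s ∈ Yset ∧ s.length = i + 1} := by
  apply Set.Finite.subset (Set.Finite.image (mkS i) (Set.finite_Iic (i ^ 2)))
  rintro s ⟨hsY, hlen⟩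
  have hseq := yset_eq hsY
  refine ⟨s.getD (s.length - 1) 0, ?_, ?_⟩
  · have := hsY.1 (s.length - 1) (by omega)
    simp only [Set.mem_Iic]
    calc s.getD (s.length - 1) 0 ≤ (s.length - 1) ^ 2 := this
      _ = i ^ 2 := by rw [hlen]; simp
  · rw [hlen] at hseq
    simp only [Nat.add_sub_cancel] at hseq
    rw [hlen, Nat.add_sub_cancel] at *
    exact hseq.symm

lemma not_memLf_of_big {f : ℕ → ℕ} {B : Set (List ℕ)}
    (hbig : ∀ k, ∃ i, k * (i + 1) < cnt B i) : ¬ MemLf f B := by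
  intro hmem
  obtain ⟨k, hk⟩ := cnt_le_of_memLf hmem
  obtain ⟨i, hi⟩ := hbig k
  exact absurd (hk i) (by omega)

section Main

variable {X : Set (List ℕ)} (hX : X ⊆ Yset) (h : ↥X → ℚ)
include hX

lemma im_subset_Yset (S : Set ↥X) : Subtype.val '' S ⊆ Yset := by
  rintro - ⟨x, -, rfl⟩
  exact hX x.2

/-- positivity extraction -/
lemma exists_big {S : Set ↥X} (hpos : ¬ MemLf (fun n => n ^ 2) (Subtype.val '' S)) :
    ∀ k, ∃ i, k * (i + 1) < cnt (Subtype.val '' S) i := by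
  intro k
  by_contra hcon
  push_neg at hcon
  exact hpos (memLf_of_cnt (im_subset_Yset hX S) (fun i => hcon i))

omit hX in
/-- counted elements concentrate on one length level -/
lemma cnt_level (S : Set ↥X) (i : ℕ) :
    cnt (Subtype.val '' S) i ≤
      cnt (Subtype.val '' (S ∩ {s : ↥X | (s : List ℕ).length = i + 1})) i := by
  classical
  apply Finset.card_le_card
  intro m hm
  simp only [Finset.mem_filter] at *
  refine ⟨hm.1, ?_⟩
  obtain ⟨x, hx1, hx2⟩ := hm.2
  refine ⟨x, ⟨hx1, ?_⟩, hx2⟩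
  show (x : List ℕ).length = i + 1
  rw [hx2]
  simp

lemma level_finite (i : ℕ) : Set.Finite {s : ↥X | (s : List ℕ).length = i + 1} := by
  have h1 : Set.Finite (Subtype.val ⁻¹' {s | s ∈ Yset ∧ s.length = i + 1} : Set ↥X) :=
    Set.Finite.preimage (Subtype.val_injective.injOn) (levelFinite i)
  apply h1.subset
  intro s hs
  exact ⟨hX s.2, hs⟩

/-- Case 1: some interval is hereditarily positive. -/
lemma case1 (p₀ q₀ : ℚ) (hpq : p₀ < q₀)
    (hbig : ∀ p q : ℚ, p₀ < p → p < q → q < q₀ →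
      ¬ MemLf (fun n => n ^ 2) (Subtype.val '' (h ⁻¹' Set.Icc p q)))
    (hKat : ∀ A : Set ℚ, IsNowhereDense A →
      MemLf (fun n => n ^ 2) (Subtype.val '' (h ⁻¹' A))) : False := by
  classical
  obtain ⟨x, hxirr, hx1, hx2⟩ := exists_irrational_btwn (show (p₀ : ℝ) < q₀ by exact_mod_cast hpq)
  -- choose shrinking rational intervals around x
  have H : ∀ n : ℕ, ∃ ab : ℚ × ℚ,
      p₀ < ab.1 ∧ x - 1/(n+1) < (ab.1 : ℝ) ∧ (ab.1 : ℝ) < x ∧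
      (x : ℝ) < ab.2 ∧ (ab.2 : ℝ) < x + 1/(n+1) ∧ ab.2 < q₀ := by
    intro n
    have hpos1 : (0:ℝ) < 1/(n+1) := by positivity
    obtain ⟨a, ha1, ha2⟩ := exists_rat_btwn (show max (p₀ : ℝ) (x - 1/(n+1)) < x by
      simp only [max_lt_iff]; constructor <;> [exact hx1; linarith])
    obtain ⟨b, hb1, hb2⟩ := exists_rat_btwn (show (x:ℝ) < min (q₀ : ℝ) (x + 1/(n+1)) by
      simp only [lt_min_iff]; constructor <;> [exact hx2; linarith])
    simp only [max_lt_iff, lt_min_iff] at ha1 hb2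
    exact ⟨(a, b), by exact_mod_cast ha1.1, ha1.2, ha2, hb1, hb2.2, by exact_mod_cast hb2.1⟩
  choose ab hab1 hab2 hab3 hab4 hab5 hab6 using H
  set a : ℕ → ℚ := fun n => (ab n).1 with ha
  set b : ℕ → ℚ := fun n => (ab n).2 with hb
  have hableq : ∀ n, a n < b n := fun n => by
    have : (a n : ℝ) < b n := lt_trans (hab3 n) (hab4 n)
    exact_mod_cast this
  -- choose big levels
  have H2 : ∀ n : ℕ, ∃ i : ℕ,
      n * (i + 1) < cnt (Subtype.val '' (h ⁻¹' Set.Icc (a n) (b n))) i := by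
    intro n
    exact exists_big hX (hbig (a n) (b n) (hab1 n) (hableq n) (hab6 n)) n
  choose lev hlev using H2
  set S : ℕ → Set ↥X := fun n =>
    h ⁻¹' Set.Icc (a n) (b n) ∩ {s : ↥X | (s : List ℕ).length = lev n + 1} with hS
  have hSfin : ∀ n, (S n).Finite := fun n =>
    ((level_finite hX (lev n)).subset (fun s hs => hs.2))
  set T : ℕ → Set ℚ := fun n => h '' S n with hT
  have hTfin : ∀ n, (T n).Finite := fun n => (hSfin n).image h
  set A : Set ℚ := ⋃ n, T n with hA
  -- A is nowhere dense
  have hnwd : IsNowhereDense A := by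
    rw [IsNowhereDense, Set.eq_empty_iff_forall_notMem]
    intro q hq
    rw [mem_interior_iff_mem_nhds, Metric.mem_nhds_iff] at hq
    obtain ⟨ε, hε, hball⟩ := hq
    have hqx : ((q : ℝ)) ≠ x := fun hqe => hxirr ⟨q, hqe⟩
    set d : ℝ := dist (q : ℝ) x with hd
    have hdpos : 0 < d := dist_pos.2 hqx
    set ε' : ℝ := min ε (d/2) with hε'
    have hε'pos : 0 < ε' := lt_min hε (by linarith)
    obtain ⟨n₀, hn₀⟩ := exists_nat_one_div_lt (show (0:ℝ) < d/2 by linarith)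
    -- points of T n for n ≥ n₀ are far from q
    have hout : ∀ n, n₀ ≤ n → ∀ y ∈ T n, y ∉ Metric.ball q ε' := by
      intro n hn y hy hmem
      obtain ⟨s, hs, rfl⟩ := hy
      have hy1 : a n ≤ h s ∧ h s ≤ b n := hs.1
      have hyx : |((h s : ℝ)) - x| < 1/(n₀+1) := by
        have l1 : (x:ℝ) - 1/(n+1) < (h s : ℝ) := lt_of_lt_of_le (hab2 n) (by exact_mod_cast hy1.1)
        have l2 : ((h s : ℝ)) < x + 1/(n+1) := lt_of_le_of_lt (by exact_mod_cast hy1.2) (hab5 n)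
        have l3 : (1:ℝ)/(n+1) ≤ 1/(n₀+1) := by
          apply one_div_le_one_div_of_le
          · positivity
          · exact_mod_cast Nat.add_le_add_right hn 1
        rw [abs_lt]
        constructor <;> linarith
      have hdist : dist (h s) q < ε' := hmem
      have hcast : dist (h s) q = |((h s : ℝ)) - (q : ℝ)| := by
        rw [Rat.dist_eq]
      rw [hcast] at hdist
      have htri : d ≤ |((q:ℝ)) - (h s : ℝ)| + |((h s : ℝ)) - x| := by
        rw [hd]
        calc dist (q:ℝ) x ≤ dist (q:ℝ) ((h s : ℝ)) + dist ((h s:ℝ)) x := dist_triangle _ _ _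
          _ = |((q:ℝ)) - (h s : ℝ)| + |((h s : ℝ)) - x| := by rw [Real.dist_eq, Real.dist_eq]
      rw [abs_sub_comm] at htri
      have : ε' ≤ d/2 := min_le_right _ _
      have h1n : (1:ℝ)/(n₀+1) < d/2 := hn₀
      linarith [htri, hyx, hdist]
    -- the finite garbage
    set G : Set ℚ := ⋃ n ∈ Finset.range n₀, T n with hG
    have hGfin : G.Finite := Set.Finite.biUnion (Finset.range n₀).finite_toSet
      (fun n _ => hTfin n)
    -- pick q' in the ball avoiding G
    obtain ⟨δ, hδ1, hδ2⟩ := exists_rat_btwn hε'pos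
    have hδq : (0:ℚ) < δ := by exact_mod_cast hδ1
    have hIooinf : (Set.Ioo q (q + δ)).Infinite := Set.Ioo_infinite (by linarith)
    obtain ⟨q', hq'1, hq'2⟩ := (hIooinf.diff hGfin).nonempty
    have hq'ball : q' ∈ Metric.ball q ε' := by
      rw [Metric.mem_ball, Rat.dist_eq]
      have h1 : q < q' := hq'1.1
      have h2 : q' < q + δ := hq'1.2
      have : |q' - q| < δ := by rw [abs_of_pos (by linarith)]; linarith
      calc (|q' - q| : ℝ) < δ := by exact_mod_cast this
        _ < ε' := hδ2
    -- small ball around q' avoiding G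
    have hGopen : IsOpen Gᶜ := hGfin.isClosed.isOpen_compl
    obtain ⟨ε₁, hε₁pos, hε₁⟩ := Metric.isOpen_iff.1 hGopen q' hq'2
    set ε'' : ℝ := min ε₁ (ε' - dist q' q) with hε''
    have hε''pos : 0 < ε'' := by
      apply lt_min hε₁pos
      have := Metric.mem_ball.1 hq'ball
      linarith
    -- ball q' ε'' misses A
    have hmiss : Metric.ball q' ε'' ∩ A = ∅ := by
      rw [Set.eq_empty_iff_forall_notMem]
      rintro y ⟨hy1, hy2⟩
      obtain ⟨n, hn⟩ := Set.mem_iUnion.1 hy2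
      rcases Nat.lt_or_ge n n₀ with hlt | hge
      · have : y ∈ G := Set.mem_biUnion (Finset.mem_range.2 hlt) hn
        have : y ∈ Gᶜ := hε₁ (Metric.ball_subset_ball (min_le_left _ _) hy1)
        exact this ‹y ∈ G›
      · apply hout n hge y hn
        rw [Metric.mem_ball] at *
        calc dist y q ≤ dist y q' + dist q' q := dist_triangle _ _ _
          _ < ε'' + dist q' q := by linarith
          _ ≤ ε' := by
              have := min_le_right ε₁ (ε' - dist q' q)
              have h2 : ε'' ≤ ε' - dist q' q := this
              linarith
    -- but q' ∈ closure A
    have hq'cl : q' ∈ closure A := hball (Metric.ball_subset_ball (min_le_left _ _) hq'ball)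
    obtain ⟨y, hy⟩ := mem_closure_iff.1 hq'cl (Metric.ball q' ε'') Metric.isOpen_ball
      (Metric.mem_ball_self hε''pos)
    rw [Set.eq_empty_iff_forall_notMem] at hmiss
    exact hmiss y hy
  -- preimage of A is big
  have hAbig : ∀ k, ∃ i, k * (i + 1) < cnt (Subtype.val '' (h ⁻¹' A)) i := by
    intro k
    refine ⟨lev k, lt_of_lt_of_le (hlev k) ?_⟩
    calc cnt (Subtype.val '' (h ⁻¹' Set.Icc (a k) (b k))) (lev k)
        ≤ cnt (Subtype.val '' (S k)) (lev k) := cnt_level _ (lev k)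
      _ ≤ cnt (Subtype.val '' (h ⁻¹' A)) (lev k) := by
          apply cnt_mono
          apply Set.image_mono
          intro s hs
          show h s ∈ A
          exact Set.mem_iUnion.2 ⟨k, Set.mem_image_of_mem h hs⟩
  exact not_memLf_of_big hAbig (hKat A hnwd)


omit hX in
/-- avoid a finite set with a subinterval -/
lemma avoid_finite (G : Set ℚ) (hG : G.Finite) :
    ∀ p q : ℚ, p < q → ∃ p' q' : ℚ, p < p' ∧ p' < q' ∧ q' < q ∧
      ∀ y ∈ G, y ∉ Set.Ioo p' q' := by
  refine Set.Finite.induction_on G hG ?_ ?_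
  · intro p q hpq
    obtain ⟨p', hp'⟩ := exists_rat_btwn hpq
    obtain ⟨q', hq'⟩ := exists_rat_btwn hp'.2
    exact ⟨p', q', hp'.1, hq'.1, hq'.2, by simp⟩
  · intro a Grest _ _ IH p q hpq
    obtain ⟨p', q', h1, h2, h3, h4⟩ := IH p q hpq
    by_cases ha : a ∈ Set.Ioo p' q'
    · obtain ⟨r, hr⟩ := exists_rat_btwn ha.1
      obtain ⟨r2, hr2⟩ := exists_rat_btwn hr.2
      refine ⟨r, r2, lt_trans h1 hr.1, hr2.1, lt_trans hr2.2 (lt_trans ha.2 h3), ?_⟩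
      rintro y hy ⟨hy1, hy2⟩
      rcases Set.mem_insert_iff.1 hy with rfl | hyG
      · exact absurd (lt_trans hr2.2 hy2) (lt_irrefl _)
      · exact h4 y hyG ⟨lt_trans hr.1 hy1, lt_trans hy2 (lt_trans hr2.2 ha.2)⟩
    · refine ⟨p', q', h1, h2, h3, ?_⟩
      rintro y hy hy2
      rcases Set.mem_insert_iff.1 hy with rfl | hyG
      · exact ha hy2
      · exact h4 y hyG hy2

end Main

section Case2

variable {X : Set (List ℕ)} (h : ↥X → ℚ)

open Classical in
noncomputable def guardSet (c : ℚ × ℚ × ℕ) : Set ↥X :=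
  if MemLf (fun n => n ^ 2) (Subtype.val '' (h ⁻¹' Set.Icc c.1 c.2.1)) then
    h ⁻¹' Set.Icc c.1 c.2.1 else ∅

lemma guard_small (c : ℚ × ℚ × ℕ) :
    MemLf (fun n => n ^ 2) (Subtype.val '' guardSet h c) := by
  rw [guardSet]
  split
  · assumption
  · rw [Set.image_empty]; exact memLf_empty _

lemma guard_eq {c : ℚ × ℚ × ℕ}
    (hc : MemLf (fun n => n ^ 2) (Subtype.val '' (h ⁻¹' Set.Icc c.1 c.2.1))) :
    guardSet h c = h ⁻¹' Set.Icc c.1 c.2.1 := by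
  rw [guardSet, if_pos hc]

noncomputable def Wg (l : List (ℚ × ℚ × ℕ)) : Set ↥X := ⋃ c ∈ l, guardSet h c

lemma wg_nil : Wg h [] = ∅ := by simp [Wg]

lemma wg_append (l l' : List (ℚ × ℚ × ℕ)) : Wg h (l ++ l') = Wg h l ∪ Wg h l' := by
  ext x
  simp only [Wg, Set.mem_iUnion, List.mem_append, Set.mem_union]
  constructor
  · rintro ⟨c, (hc | hc), hx⟩
    · exact Or.inl ⟨c, hc, hx⟩
    · exact Or.inr ⟨c, hc, hx⟩
  · rintro (⟨c, hc, hx⟩ | ⟨c, hc, hx⟩)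
    · exact ⟨c, Or.inl hc, hx⟩
    · exact ⟨c, Or.inr hc, hx⟩

lemma wg_singleton (c : ℚ × ℚ × ℕ) : Wg h [c] = guardSet h c := by
  simp [Wg]

lemma wg_small : ∀ l : List (ℚ × ℚ × ℕ), MemLf (fun n => n ^ 2) (Subtype.val '' Wg h l) := by
  intro l
  induction l with
  | nil => rw [wg_nil, Set.image_empty]; exact memLf_empty _
  | cons c l IH =>
      have : (c :: l) = [c] ++ l := rfl
      rw [this, wg_append, wg_singleton, Set.image_union]
      exact memLf_union (guard_small h c) IH

lemma wg_mem {l : List (ℚ × ℚ × ℕ)} {c : ℚ × ℚ × ℕ} (hc : c ∈ l)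
    (hsmall : MemLf (fun n => n ^ 2) (Subtype.val '' (h ⁻¹' Set.Icc c.1 c.2.1))) :
    h ⁻¹' Set.Icc c.1 c.2.1 ⊆ Wg h l := by
  intro x hx
  exact Set.mem_iUnion₂.2 ⟨c, hc, by rwa [guard_eq h hsmall]⟩

noncomputable def Gl (l : List (ℚ × ℚ × ℕ)) : Set ℚ :=
  ⋃ j ∈ Finset.range l.length,
    h '' ({s : ↥X | (s : List ℕ).length = (l.getD j default).2.2 + 1} ∩ (Wg h (l.take (j + 1)))ᶜ)

lemma gl_finite (hX : X ⊆ Yset) (l : List (ℚ × ℚ × ℕ)) : (Gl h l).Finite := by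
  apply Set.Finite.biUnion (Finset.range l.length).finite_toSet
  intro j _
  exact (((level_finite hX _).subset Set.inter_subset_left).image h)

/-- the choice of the interval at one's position in the enumeration -/
def En (e : ℕ → ℚ × ℚ) (n : ℕ) : ℚ × ℚ :=
  if (e n).1 < (e n).2 then e n else ((0 : ℚ), (1 : ℚ))

lemma en_lt (e : ℕ → ℚ × ℚ) (n : ℕ) : (En e n).1 < (En e n).2 := by
  rw [En]; split
  · assumption
  · norm_num

lemma en_eq {e : ℕ → ℚ × ℚ} {n : ℕ} (hn : (e n).1 < (e n).2) : En e n = e n := if_pos hn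

variable (hX : X ⊆ Yset) (hpos : ¬ MemLf (fun n => n ^ 2) X)
  (hD : ∀ p q : ℚ, p < q → ∃ u v : ℚ, p < u ∧ u < v ∧ v < q ∧
    MemLf (fun n => n ^ 2) (Subtype.val '' (h ⁻¹' Set.Icc u v)))
  (e : ℕ → ℚ × ℚ)

include hX hpos hD e

omit hD e in
lemma compl_big {W : Set ↥X} (hW : MemLf (fun n => n ^ 2) (Subtype.val '' W)) :
    ∀ k, ∃ i, k * (i + 1) < cnt (Subtype.val '' (Wᶜ)) i := by
  apply exists_big hX
  intro hc
  apply hpos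
  have : Subtype.val '' (Wᶜ) ∪ Subtype.val '' W = X := by
    rw [← Set.image_union, compl_union_self, Subtype.coe_image_univ]
  rw [← this]
  exact memLf_union hc hW

lemma step_ex (l : List (ℚ × ℚ × ℕ)) :
    ∃ c : ℚ × ℚ × ℕ,
      (En e l.length).1 < c.1 ∧ c.1 < c.2.1 ∧ c.2.1 < (En e l.length).2 ∧
      MemLf (fun n => n ^ 2) (Subtype.val '' (h ⁻¹' Set.Icc c.1 c.2.1)) ∧
      (∀ y ∈ Gl h l, y ∉ Set.Icc c.1 c.2.1) ∧
      l.length * (c.2.2 + 1) < cnt (Subtype.val '' ((Wg h (l ++ [c]))ᶜ)) c.2.2 := by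
  obtain ⟨p', q', hp1, hp2, hp3, hp4⟩ :=
    avoid_finite (Gl h l) (gl_finite h hX l) _ _ (en_lt e l.length)
  obtain ⟨u, v, hu1, hu2, hu3, hsmall⟩ := hD p' q' hp2
  have havoid : ∀ y ∈ Gl h l, y ∉ Set.Icc u v := by
    intro y hy hyIcc
    exact hp4 y hy ⟨lt_of_lt_of_le hu1 hyIcc.1, lt_of_le_of_lt hyIcc.2 hu3⟩
  have hWsmall : MemLf (fun n => n ^ 2)
      (Subtype.val '' (Wg h l ∪ h ⁻¹' Set.Icc u v)) := by
    rw [Set.image_union]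
    exact memLf_union (wg_small h l) hsmall
  obtain ⟨i, hi⟩ := compl_big hX hpos hWsmall l.length
  refine ⟨(u, v, i), hp1.trans hu1, hu2, hu3.trans hp3, hsmall, havoid, ?_⟩
  have hWeq : Wg h (l ++ [(u, v, i)]) = Wg h l ∪ h ⁻¹' Set.Icc u v := by
    rw [wg_append, wg_singleton, guard_eq h hsmall]
  rw [hWeq]
  exact hi

noncomputable def stepF (l : List (ℚ × ℚ × ℕ)) : ℚ × ℚ × ℕ :=
  Classical.choose (step_ex h hX hpos hD e l)

lemma stepF_spec (l : List (ℚ × ℚ × ℕ)) :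
    (En e l.length).1 < (stepF h hX hpos hD e l).1 ∧
    (stepF h hX hpos hD e l).1 < (stepF h hX hpos hD e l).2.1 ∧
    (stepF h hX hpos hD e l).2.1 < (En e l.length).2 ∧
    MemLf (fun n => n ^ 2) (Subtype.val ''
      (h ⁻¹' Set.Icc (stepF h hX hpos hD e l).1 (stepF h hX hpos hD e l).2.1)) ∧
    (∀ y ∈ Gl h l, y ∉ Set.Icc (stepF h hX hpos hD e l).1 (stepF h hX hpos hD e l).2.1) ∧
    l.length * ((stepF h hX hpos hD e l).2.2 + 1) <
      cnt (Subtype.val '' ((Wg h (l ++ [stepF h hX hpos hD e l]))ᶜ)) (stepF h hX hpos hD e l).2.2 :=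
  Classical.choose_spec (step_ex h hX hpos hD e l)

noncomputable def gseq : ℕ → List (ℚ × ℚ × ℕ)
  | 0 => []
  | n + 1 => gseq n ++ [stepF h hX hpos hD e (gseq n)]

lemma gseq_len : ∀ n, (gseq h hX hpos hD e n).length = n := by
  intro n
  induction n with
  | zero => rfl
  | succ n IH => rw [gseq, List.length_append, IH]; rfl

lemma gseq_take : ∀ m n, n ≤ m → (gseq h hX hpos hD e m).take n = gseq h hX hpos hD e n := by
  intro m
  induction m with
  | zero => intro n hn; interval_cases n; rfl
  | succ m IH =>
      intro n hn
      rcases Nat.lt_or_ge n (m + 1) with hlt | hge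
      · rw [gseq, List.take_append_of_le_length (by rw [gseq_len]; omega)]
        exact IH n (by omega)
      · have : n = m + 1 := by omega
        subst this
        have h2 := List.take_length (l := gseq h hX hpos hD e (m+1))
        rwa [gseq_len] at h2

lemma gseq_getD : ∀ m n, n < m →
    (gseq h hX hpos hD e m).getD n default = stepF h hX hpos hD e (gseq h hX hpos hD e n) := by
  intro m
  induction m with
  | zero => omega
  | succ m IH =>
      intro n hn
      rcases Nat.lt_or_ge n m with hlt | hge
      · rw [gseq, List.getD_append _ _ _ _ (by rw [gseq_len]; omega)]
        exact IH n hlt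
      · have hnm : n = m := by omega
        subst hnm
        rw [gseq, List.getD_eq_getElem _ _ (by simp [gseq_len]),
          List.getElem_append_right (by rw [gseq_len])]
        simp [gseq_len]

lemma gseq_mem_mono : ∀ n m, n ≤ m → ∀ c ∈ gseq h hX hpos hD e n, c ∈ gseq h hX hpos hD e m := by
  intro n m hnm
  induction m with
  | zero => intro c hc; have : n = 0 := by omega
            subst this; exact hc
  | succ m IH =>
      intro c hc
      rcases Nat.lt_or_ge n (m + 1) with hlt | hge
      · rw [gseq, List.mem_append]
        exact Or.inl (IH (by omega) c hc)
      · have : n = m + 1 := by omega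
        subst this; exact hc

lemma case2 (he : Function.Surjective e)
    (hKat : ∀ A : Set ℚ, IsNowhereDense A →
      MemLf (fun n => n ^ 2) (Subtype.val '' (h ⁻¹' A))) : False := by
  classical
  set t : ℕ → ℚ × ℚ × ℕ := fun n => stepF h hX hpos hD e (gseq h hX hpos hD e n) with ht
  have hgsucc : ∀ n, gseq h hX hpos hD e (n + 1) = gseq h hX hpos hD e n ++ [t n] := by
    intro n; rw [gseq]
  have hspec : ∀ n,
      (En e n).1 < (t n).1 ∧ (t n).1 < (t n).2.1 ∧ (t n).2.1 < (En e n).2 ∧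
      MemLf (fun n => n ^ 2) (Subtype.val '' (h ⁻¹' Set.Icc (t n).1 (t n).2.1)) ∧
      (∀ y ∈ Gl h (gseq h hX hpos hD e n), y ∉ Set.Icc (t n).1 (t n).2.1) ∧
      n * ((t n).2.2 + 1) <
        cnt (Subtype.val '' ((Wg h (gseq h hX hpos hD e (n + 1)))ᶜ)) (t n).2.2 := by
    intro n
    have H := stepF_spec h hX hpos hD e (gseq h hX hpos hD e n)
    rw [gseq_len h hX hpos hD e n] at H
    rw [hgsucc n]
    exact H
  set A : Set ℚ := (⋃ n, Set.Ioo (t n).1 (t n).2.1)ᶜ with hA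
  -- A is nowhere dense
  have hnwd : IsNowhereDense A := by
    have hclosed : IsClosed A := (isOpen_iUnion (fun n => isOpen_Ioo)).isClosed_compl
    rw [IsNowhereDense, hclosed.closure_eq, Set.eq_empty_iff_forall_notMem]
    intro q hq
    obtain ⟨c, d, hmem, hsub⟩ := mem_nhds_iff_exists_Ioo_subset.1 (mem_interior_iff_mem_nhds.1 hq)
    obtain ⟨n, hn⟩ := he (c, d)
    have hcd : c < d := hmem.1.trans hmem.2
    have hEn : En e n = (c, d) := by
      rw [en_eq]
      · exact hn
      · rw [hn]; exact hcd
    obtain ⟨w, hw⟩ := exists_rat_btwn (hspec n).2.1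
    have hwIoo : w ∈ Set.Ioo c d := by
      have l1 := (hspec n).1
      have l2 := (hspec n).2.2.1
      rw [hEn] at l1 l2
      exact ⟨l1.trans hw.1, hw.2.trans l2⟩
    exact (hsub hwIoo) (Set.mem_iUnion.2 ⟨n, hw.1, hw.2⟩)
  -- the key inclusion into the preimage of A
  have hsubA : ∀ n, (Wg h (gseq h hX hpos hD e (n + 1)))ᶜ ∩
      {s : ↥X | (s : List ℕ).length = (t n).2.2 + 1} ⊆ h ⁻¹' A := by
    intro n s hs
    show h s ∈ A
    intro hmem
    obtain ⟨m, hm⟩ := Set.mem_iUnion.1 hmem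
    rcases le_or_gt m n with hmn | hnm
    · -- m ≤ n : s would be in Wg
      have htm : t m ∈ gseq h hX hpos hD e (n + 1) := by
        apply gseq_mem_mono h hX hpos hD e (m + 1) (n + 1) (by omega)
        rw [hgsucc m]
        simp
      have : s ∈ Wg h (gseq h hX hpos hD e (n + 1)) := by
        apply wg_mem h htm (hspec m).2.2.2.1
        exact ⟨le_of_lt hm.1, le_of_lt hm.2⟩
      exact hs.1 this
    · -- n < m : h s is protected at stage m
      have hGl : h s ∈ Gl h (gseq h hX hpos hD e m) := by
        rw [Gl]
        apply Set.mem_biUnion (s := (Finset.range (gseq h hX hpos hD e m).length : Set ℕ))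
          (show n ∈ _ by rw [gseq_len]; simpa using hnm)
        refine ⟨s, ⟨?_, ?_⟩, rfl⟩
        · show (s : List ℕ).length = ((gseq h hX hpos hD e m).getD n default).2.2 + 1
          rw [gseq_getD h hX hpos hD e m n hnm]
          exact hs.2
        · rw [gseq_take h hX hpos hD e m (n + 1) (by omega)]
          exact hs.1
      exact (hspec m).2.2.2.2.1 (h s) hGl ⟨le_of_lt hm.1, le_of_lt hm.2⟩
  -- the preimage of A is big
  have hbigA : ∀ k, ∃ i, k * (i + 1) < cnt (Subtype.val '' (h ⁻¹' A)) i := by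
    intro k
    refine ⟨(t k).2.2, lt_of_lt_of_le (hspec k).2.2.2.2.2 ?_⟩
    calc cnt (Subtype.val '' ((Wg h (gseq h hX hpos hD e (k + 1)))ᶜ)) (t k).2.2
        ≤ cnt (Subtype.val '' ((Wg h (gseq h hX hpos hD e (k + 1)))ᶜ ∩
            {s : ↥X | (s : List ℕ).length = (t k).2.2 + 1})) (t k).2.2 := cnt_level _ _
      _ ≤ cnt (Subtype.val '' (h ⁻¹' A)) (t k).2.2 :=
          cnt_mono (Set.image_mono (hsubA k)) _
  exact not_memLf_of_big hbigA (hKat A hnwd)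

end Case2


end Aux


/-- For `f n = n²` and every `𝓛_f`-positive `X ⊆ Y`, `nwd` is not Katětov below
`𝓛_f ↾ X`. -/
theorem stmt7 (X : Set (List ℕ)) (hX : X ⊆ Yset)
    (hpos : ¬ MemLf (fun n => n ^ 2) X) :
    ¬ KatLe nwdIdeal (LfRestrict (fun n => n ^ 2) X) := by
  rintro ⟨h, hKat'⟩
  have hKat : ∀ A : Set ℚ, IsNowhereDense A →
      MemLf (fun n => n ^ 2) (Subtype.val '' (h ⁻¹' A)) := fun A hA => hKat' A hA
  by_cases hD : ∀ p q : ℚ, p < q → ∃ u v : ℚ, p < u ∧ u < v ∧ v < q ∧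
      MemLf (fun n => n ^ 2) (Subtype.val '' (h ⁻¹' Set.Icc u v))
  · obtain ⟨e, he⟩ := exists_surjective_nat (ℚ × ℚ)
    exact case2 h hX hpos hD e he hKat
  · push_neg at hD
    obtain ⟨p₀, q₀, hpq, hbig⟩ := hD
    exact case1 hX h p₀ q₀ hpq hbig hKat
end

section
/- Let f(n) = n². The ideal 𝓛_f↾Y is F_σ: the family {A ⊆ Y : A ∈ 𝓛_f}, viewed as a subset of the Cantor space 2^Y of all subsets of Y with the product topology, is a countable union of closed sets. -/
/-! ### Auxiliary machinery -/

/-- A boolean "slalom" condition: at index `i`, at most `i+1` values below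
`i^2+1` are selected. -/
def Good (u : ℕ → ℕ → Bool) : Prop :=
  ∀ i, (Finset.univ.filter (fun v : Fin (i ^ 2 + 1) => u i (v : ℕ) = true)).card ≤ i + 1

/-- A boolean slalom covers a sequence. -/
def Covers (u : ℕ → ℕ → Bool) (s : List ℕ) : Prop :=
  ∀ i < s.length, u i (s.getD i 0) = true

/-- The `n`-th piece of the `F_σ` decomposition. -/
def Cn (n : ℕ) : Set (Yset → Bool) :=
  {χ | ∃ t : Fin n → ℕ → ℕ → Bool, (∀ j, Good (t j)) ∧
    ∀ y : Yset, χ y = true → ∃ j, Covers (t j) (y : List ℕ)}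

/-- The genuine slalom associated to a boolean slalom. -/
def ZofB (u : ℕ → ℕ → Bool) (i : ℕ) : Finset ℕ :=
  (Finset.univ.filter (fun v : Fin (i ^ 2 + 1) => u i (v : ℕ) = true)).image
    (fun v : Fin (i ^ 2 + 1) => (v : ℕ))

lemma ZofB_card {u : ℕ → ℕ → Bool} (hu : Good u) (i : ℕ) : (ZofB u i).card ≤ i + 1 :=
  Finset.card_image_le.trans (hu i)

lemma mem_ZofB {u : ℕ → ℕ → Bool} {i a : ℕ} (ha : a ≤ i ^ 2) (h : u i a = true) :
    a ∈ ZofB u i := by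
  refine Finset.mem_image.mpr ⟨⟨a, by omega⟩, ?_, rfl⟩
  simp only [Finset.mem_filter, Finset.mem_univ, true_and]
  exact h

/-- The boolean slalom associated to a genuine slalom. -/
def BofZ (Z : ℕ → Finset ℕ) (i v : ℕ) : Bool := decide (v ∈ Z i)

lemma BofZ_good {Z : ℕ → Finset ℕ} (hZ : IsSlalom Z) : Good (BofZ Z) := by
  intro i
  have hsub : ∀ a ∈ Finset.univ.filter
      (fun v : Fin (i ^ 2 + 1) => BofZ Z i (v : ℕ) = true), (a : ℕ) ∈ Z i := by
    intro a ha
    simp only [Finset.mem_filter, BofZ, decide_eq_true_eq] at ha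
    exact ha.2
  exact (Finset.card_le_card_of_injOn (fun a : Fin (i ^ 2 + 1) => (a : ℕ)) hsub
    (fun a _ b _ h => Fin.val_injective h)).trans (hZ i)

lemma covers_closed {n : ℕ} (j : Fin n) (s : List ℕ) :
    IsClosed {t : Fin n → ℕ → ℕ → Bool | Covers (t j) s} := by
  have : {t : Fin n → ℕ → ℕ → Bool | Covers (t j) s} =
      ⋂ i : Fin s.length, {t | t j (i : ℕ) (s.getD (i : ℕ) 0) = true} := by
    ext t
    simp only [Set.mem_setOf_eq, Set.mem_iInter, Covers]
    constructor
    · intro h i; exact h i i.2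
    · intro h i hi; exact h ⟨i, hi⟩
  rw [this]
  refine isClosed_iInter fun i => ?_
  have hc : Continuous fun t : Fin n → ℕ → ℕ → Bool => t j (i : ℕ) (s.getD (i : ℕ) 0) :=
    (continuous_apply (s.getD (i : ℕ) 0)).comp
      ((continuous_apply (i : ℕ)).comp (continuous_apply j))
  exact (isClosed_discrete {true}).preimage hc

lemma good_closed {n : ℕ} (j : Fin n) :
    IsClosed {t : Fin n → ℕ → ℕ → Bool | Good (t j)} := by
  have : {t : Fin n → ℕ → ℕ → Bool | Good (t j)} =
      ⋂ i : ℕ, {t | (Finset.univ.filter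
        (fun v : Fin (i ^ 2 + 1) => t j i (v : ℕ) = true)).card ≤ i + 1} := by
    ext t; simp [Good]
  rw [this]
  refine isClosed_iInter fun i => ?_
  have hg : Continuous fun (t : Fin n → ℕ → ℕ → Bool) (v : Fin (i ^ 2 + 1)) =>
      t j i (v : ℕ) := by
    refine continuous_pi fun v => ?_
    exact (continuous_apply ((v : ℕ))).comp ((continuous_apply i).comp (continuous_apply j))
  have heq : {t : Fin n → ℕ → ℕ → Bool | (Finset.univ.filter
        (fun v : Fin (i ^ 2 + 1) => t j i (v : ℕ) = true)).card ≤ i + 1} =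
      (fun (t : Fin n → ℕ → ℕ → Bool) (v : Fin (i ^ 2 + 1)) => t j i (v : ℕ)) ⁻¹'
      {u : Fin (i ^ 2 + 1) → Bool |
        (Finset.univ.filter (fun v => u v = true)).card ≤ i + 1} := rfl
  rw [heq]
  exact (isClosed_discrete _).preimage hg

lemma Cn_closed (n : ℕ) : IsClosed (Cn n) := by
  refine isClosed_of_closure_subset ?_
  intro χ hχ
  by_cases hA : ∃ y : Yset, χ y = true
  · obtain ⟨y0, hy0⟩ := hA
    set K : {y : Yset // χ y = true} → Set (Fin n → ℕ → ℕ → Bool) :=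
      fun p => {t | ∀ j, Good (t j)} ∩ {t | ∃ j, Covers (t j) (p.1 : List ℕ)} with hK
    have hKclosed : ∀ p, IsClosed (K p) := by
      intro p
      refine IsClosed.inter ?_ ?_
      · have h1 : {t : Fin n → ℕ → ℕ → Bool | ∀ j, Good (t j)} =
            ⋂ j, {t | Good (t j)} := by ext t; simp
        rw [h1]; exact isClosed_iInter fun j => good_closed j
      · have h2 : {t : Fin n → ℕ → ℕ → Bool | ∃ j, Covers (t j) (p.1 : List ℕ)} =
            ⋃ j, {t | Covers (t j) (p.1 : List ℕ)} := by ext t; simp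
        rw [h2]; exact isClosed_iUnion_of_finite fun j => covers_closed j _
    have hne : (⋂ p, K p).Nonempty := by
      by_contra hempty
      rw [Set.not_nonempty_iff_eq_empty] at hempty
      have h0 : (Set.univ : Set (Fin n → ℕ → ℕ → Bool)) ∩ ⋂ p, K p = ∅ := by
        rw [hempty, Set.inter_empty]
      obtain ⟨u, hu⟩ := isCompact_univ.elim_finite_subfamily_closed K hKclosed h0
      -- the basic open neighbourhood of χ determined by the coordinates in u
      set V : Set (Yset → Bool) := ⋂ p ∈ u, {χ' | χ' p.1 = true} with hV
      have hVopen : IsOpen V := by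
        refine isOpen_biInter_finset fun p _ => ?_
        show IsOpen ((fun χ' : Yset → Bool => χ' p.1) ⁻¹' {true})
        exact (isOpen_discrete ({true} : Set Bool)).preimage (continuous_apply p.1)
      have hχV : χ ∈ V := by
        simp only [hV, Set.mem_iInter, Set.mem_setOf_eq]
        intro p _; exact p.2
      obtain ⟨χ', hχ'V, hχ'C⟩ := mem_closure_iff.mp hχ V hVopen hχV
      obtain ⟨t, htg, htc⟩ := hχ'C
      have hmem : t ∈ (Set.univ : Set (Fin n → ℕ → ℕ → Bool)) ∩ ⋂ p ∈ u, K p := by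
        refine ⟨trivial, ?_⟩
        simp only [Set.mem_iInter]
        intro p hp
        refine ⟨htg, ?_⟩
        have hyp : χ' p.1 = true := by
          have := hχ'V
          simp only [hV, Set.mem_iInter, Set.mem_setOf_eq] at this
          exact this p hp
        exact htc p.1 hyp
      rw [hu] at hmem
      exact hmem.elim
    obtain ⟨t, ht⟩ := hne
    simp only [Set.mem_iInter] at ht
    exact ⟨t, (ht ⟨y0, hy0⟩).1, fun y hy => (ht ⟨y, hy⟩).2⟩
  · refine ⟨fun _ _ _ => false, ?_, ?_⟩
    · intro j i; simp
    · intro y hy; exact absurd ⟨y, hy⟩ hA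

/-- For `f n = n²`, the ideal `𝓛_f ↾ Y` is `F_σ`: identifying subsets of `Y`
with their characteristic functions in the Cantor space `2^Y` (with the product
topology), the family of subsets of `Y` lying in `𝓛_f` is a countable union of
closed sets. -/
theorem stmt8 :
    ∃ C : ℕ → Set (Yset → Bool),
      (∀ n, IsClosed (C n)) ∧
      {χ : Yset → Bool | MemLf (fun n => n ^ 2)
          (Subtype.val '' {y : Yset | χ y = true})} = ⋃ n, C n := by
  refine ⟨Cn, Cn_closed, ?_⟩
  ext χ
  simp only [Set.mem_setOf_eq, Set.mem_iUnion]
  constructor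
  · rintro ⟨F, hFsl, hFcov⟩
    refine ⟨F.card, fun j => BofZ (F.equivFin.symm j : ℕ → Finset ℕ), ?_, ?_⟩
    · intro j
      exact BofZ_good (hFsl _ (F.equivFin.symm j).2)
    · intro y hy
      have hyA : (y : List ℕ) ∈ ⋃ Z ∈ F, Cf (fun n => n ^ 2) Z :=
        hFcov ⟨y, hy, rfl⟩
      simp only [Set.mem_iUnion] at hyA
      obtain ⟨Z, hZF, hZmem⟩ := hyA
      refine ⟨F.equivFin ⟨Z, hZF⟩, ?_⟩
      intro i hi
      show BofZ (F.equivFin.symm (F.equivFin ⟨Z, hZF⟩) : ℕ → Finset ℕ) i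
        ((y : List ℕ).getD i 0) = true
      rw [Equiv.symm_apply_apply]
      exact decide_eq_true (hZmem.2 i hi)
  · rintro ⟨m, t, htg, htc⟩
    classical
    refine ⟨Finset.image (fun j : Fin m => ZofB (t j)) Finset.univ, ?_, ?_⟩
    · intro Z hZ
      simp only [Finset.mem_image, Finset.mem_univ, true_and] at hZ
      obtain ⟨j, rfl⟩ := hZ
      exact ZofB_card (htg j)
    · rintro s ⟨y, hy, rfl⟩
      obtain ⟨j, hj⟩ := htc y hy
      simp only [Set.mem_iUnion]
      refine ⟨ZofB (t j), Finset.mem_image_of_mem _ (Finset.mem_univ j), y.2.1, ?_⟩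
      intro i hi
      exact mem_ZofB (y.2.1 i hi) (hj i hi)
end

section
/- add(𝓜) ≤ add*_ω(nwd). -/
open Cardinal

/-- `add(𝓜)`: the least cardinality of a family of meager subsets of the Cantor
space `2^ℕ` whose union is not meager. -/
noncomputable def addMeager : Cardinal :=
  sInf {c | ∃ 𝒜 : Set (Set (ℕ → Bool)),
    (∀ A ∈ 𝒜, IsMeagre A) ∧ ¬ IsMeagre (⋃₀ 𝒜) ∧ c = #𝒜}

/-- `add*_ω(I)`: the least cardinality of a family `𝒜 ⊆ I` such that for every
sequence `(X_n)` of sets in `I` some `A ∈ 𝒜` satisfies that `A \ X_n` is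
infinite for every `n`. -/
noncomputable def addStarOmega {α : Type*} (I : Set (Set α)) : Cardinal :=
  sInf {c | ∃ 𝒜 : Set (Set α), 𝒜 ⊆ I ∧
    (∀ X : ℕ → Set α, (∀ n, X n ∈ I) → ∃ A ∈ 𝒜, ∀ n, (A \ X n).Infinite) ∧
    c = #𝒜}

namespace Stmt14

variable {X : Type*} [TopologicalSpace X]


abbrev Cant := ℕ → Bool

/-- cylinder around `x` of depth `n` -/
def cyl (n : ℕ) (x : Cant) : Set Cant := {y | ∀ i, i < n → y i = x i}

lemma self_mem_cyl (n : ℕ) (x : Cant) : x ∈ cyl n x := fun _ _ => rfl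

lemma cyl_mono {n m : ℕ} (h : n ≤ m) (x : Cant) : cyl m x ⊆ cyl n x :=
  fun _ hy i hi => hy i (lt_of_lt_of_le hi h)

lemma isOpen_cyl (n : ℕ) (x : Cant) : IsOpen (cyl n x) := by
  have : cyl n x = ⋂ i ∈ Finset.range n, {y : Cant | y i = x i} := by
    ext y; simp [cyl]
  rw [this]
  refine isOpen_biInter_finset fun i _ => ?_
  have : IsOpen ((fun y : Cant => y i) ⁻¹' ({x i} : Set Bool)) :=
    (continuous_apply i).isOpen_preimage _ (isOpen_discrete _)
  simpa [Set.preimage] using this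

lemma exists_cyl_subset {O : Set Cant} (hO : IsOpen O) {x : Cant} (hx : x ∈ O) :
    ∃ n, cyl n x ⊆ O := by
  rcases isOpen_pi_iff.1 hO x hx with ⟨I, u, hu, hsub⟩
  rcases I.bddAbove with ⟨n, hn⟩
  refine ⟨n + 1, fun y hy => hsub ?_⟩
  intro i hi
  have := (hu i hi).2
  have hyi : y i = x i := hy i (Nat.lt_succ_of_le (hn hi))
  rw [hyi]; exact this

/-- a set determined by the first `n` coordinates is closed (indeed clopen). -/
lemma isClosed_of_determined {S : Set Cant} {n : ℕ}
    (h : ∀ x y : Cant, (∀ i, i < n → x i = y i) → (x ∈ S ↔ y ∈ S)) : IsClosed S := by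
  rw [← isOpen_compl_iff, isOpen_iff_forall_mem_open]
  intro x hx
  exact ⟨cyl n x, fun y hy hyS => hx ((h y x fun i hi => hy i hi).1 hyS),
    isOpen_cyl n x, self_mem_cyl n x⟩


variable {X : Type*} [TopologicalSpace X]

lemma nwd_union_closed {A B : Set X} (hAc : IsClosed A) (hBc : IsClosed B)
    (hA : IsNowhereDense A) (hB : IsNowhereDense B) : IsNowhereDense (A ∪ B) := by
  rw [(hAc.union hBc).isNowhereDense_iff]
  rw [hAc.isNowhereDense_iff] at hA
  rw [hBc.isNowhereDense_iff] at hB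
  have h1 : interior (A ∪ B) \ A ⊆ interior B := by
    refine interior_maximal ?_ (isOpen_interior.sdiff hAc)
    intro x hx
    rcases interior_subset hx.1 with h | h
    · exact absurd h hx.2
    · exact h
  rw [hB] at h1
  have h2 : interior (A ∪ B) ⊆ A := fun x hx => by
    by_contra hxA
    exact h1 ⟨hx, hxA⟩
  have h3 : interior (A ∪ B) ⊆ interior A := interior_maximal h2 isOpen_interior
  rw [hA] at h3
  exact Set.eq_empty_iff_forall_notMem.2 fun x hx => h3 hx

lemma nwd_union {A B : Set X} (hA : IsNowhereDense A) (hB : IsNowhereDense B) :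
    IsNowhereDense (A ∪ B) := by
  have := nwd_union_closed isClosed_closure isClosed_closure hA.closure hB.closure
  rw [IsNowhereDense] at this ⊢
  rw [closure_union]
  rwa [IsClosed.closure_eq (isClosed_closure.union isClosed_closure)] at this

lemma nwd_subset {A B : Set X} (hB : IsNowhereDense B) (h : A ⊆ B) : IsNowhereDense A := by
  rw [IsNowhereDense, Set.eq_empty_iff_forall_notMem]
  intro x hx
  have : x ∈ interior (closure B) := interior_mono (closure_mono h) hx
  rw [hB] at this; exact this

lemma nwd_isMeagre {A : Set X} (hA : IsNowhereDense A) : IsMeagre A :=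
  isMeagre_iff_countable_union_isNowhereDense.2
    ⟨{A}, by simpa using hA, Set.countable_singleton A, by simp⟩


abbrev Ext := WithBot (WithTop ℚ)

def eQ (q : ℚ) : Ext := ((q : WithTop ℚ) : Ext)

lemma top_eq : (⊤ : Ext) = ((⊤ : WithTop ℚ) : Ext) := rfl

lemma eQ_lt_eQ {a b : ℚ} : eQ a < eQ b ↔ a < b := by
  rw [eQ, eQ, WithBot.coe_lt_coe, WithTop.coe_lt_coe]

lemma eQ_le_eQ {a b : ℚ} : eQ a ≤ eQ b ↔ a ≤ b := by
  rw [eQ, eQ, WithBot.coe_le_coe, WithTop.coe_le_coe]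

lemma eQ_ne_bot (q : ℚ) : eQ q ≠ ⊥ := WithBot.coe_ne_bot

lemma eQ_ne_top (q : ℚ) : eQ q ≠ ⊤ := by
  rw [top_eq, eQ]
  intro h
  exact WithTop.coe_ne_top (WithBot.coe_eq_coe.1 h)

lemma bot_lt_eQ (q : ℚ) : (⊥ : Ext) < eQ q := WithBot.bot_lt_coe _

lemma eQ_lt_top (q : ℚ) : eQ q < (⊤ : Ext) := by
  rw [top_eq, eQ]
  exact WithBot.coe_lt_coe.2 (WithTop.coe_lt_top q)

lemma ext_fin {x : Ext} (hb : x ≠ ⊥) (ht : x ≠ ⊤) : ∃ q : ℚ, x = eQ q := by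
  obtain ⟨a, ha⟩ := WithBot.ne_bot_iff_exists.1 hb
  have ha' : a ≠ ⊤ := by
    rintro rfl
    rw [← ha] at ht
    exact ht top_eq.symm
  obtain ⟨q, hq⟩ := WithTop.ne_top_iff_exists.1 ha'
  exact ⟨q, by rw [← ha, ← hq]; rfl⟩

noncomputable def toQ (x : Ext) : ℚ := WithTop.untopD 0 (WithBot.unbotD 0 x)

lemma toQ_eQ (q : ℚ) : toQ (eQ q) = q := rfl

noncomputable def mid (a b : Ext) : ℚ :=
  if a = ⊥ then (if b = ⊤ then 0 else toQ b - 1)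
  else (if b = ⊤ then toQ a + 1 else (toQ a + toQ b) / 2)

lemma mid_between {a b : Ext} (hab : a < b) : a < eQ (mid a b) ∧ eQ (mid a b) < b := by
  unfold mid
  split_ifs with h1 h2 h3
  · subst h1; subst h2; exact ⟨bot_lt_eQ 0, eQ_lt_top 0⟩
  · subst h1
    obtain ⟨qb, rfl⟩ := ext_fin hab.ne' h2
    rw [toQ_eQ]
    exact ⟨bot_lt_eQ _, eQ_lt_eQ.2 (by linarith)⟩
  · subst h3
    obtain ⟨qa, rfl⟩ := ext_fin h1 (ne_top_of_lt hab)
    rw [toQ_eQ]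
    exact ⟨eQ_lt_eQ.2 (by linarith), eQ_lt_top _⟩
  · obtain ⟨qa, rfl⟩ := ext_fin h1 (ne_top_of_lt hab)
    obtain ⟨qb, rfl⟩ := ext_fin (by rintro rfl; simp at hab) h3
    rw [toQ_eQ, toQ_eQ]
    have hq : qa < qb := eQ_lt_eQ.1 hab
    exact ⟨eQ_lt_eQ.2 (by linarith), eQ_lt_eQ.2 (by linarith)⟩

noncomputable def cellp (σ : Cant) : ℕ → Ext × Ext
  | 0 => (⊥, ⊤)
  | n + 1 =>
    let p := cellp σ n
    if σ n then (eQ (mid p.1 p.2), p.2) else (p.1, eQ (mid p.1 p.2))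

lemma cellp_succ (σ : Cant) (n : ℕ) : cellp σ (n + 1) =
    if σ n then (eQ (mid (cellp σ n).1 (cellp σ n).2), (cellp σ n).2)
    else ((cellp σ n).1, eQ (mid (cellp σ n).1 (cellp σ n).2)) := rfl

def Jp (p : Ext × Ext) : Set ℚ := {q | p.1 < eQ q ∧ eQ q < p.2}

noncomputable def J (σ : Cant) (n : ℕ) : Set ℚ := Jp (cellp σ n)

lemma cellp_lt (σ : Cant) : ∀ n, (cellp σ n).1 < (cellp σ n).2 := by
  intro n
  induction n with
  | zero => exact (bot_lt_eQ 0).trans (eQ_lt_top 0)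
  | succ n ih =>
    rw [cellp_succ]
    cases hσ : σ n
    · simp only [hσ, Bool.false_eq_true, if_false]
      exact (mid_between ih).1
    · simp only [hσ, if_true]
      exact (mid_between ih).2


lemma cellp_congr {σ τ : Cant} : ∀ {n}, (∀ i, i < n → σ i = τ i) → cellp σ n = cellp τ n := by
  intro n
  induction n with
  | zero => intro _; rfl
  | succ n ih =>
    intro h
    rw [cellp_succ, cellp_succ, ih (fun i hi => h i (by omega)), h n (by omega)]

lemma J_congr {σ τ : Cant} {n : ℕ} (h : ∀ i, i < n → σ i = τ i) : J σ n = J τ n := by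
  rw [J, J, cellp_congr h]

lemma cellp_nested (σ : Cant) (n : ℕ) :
    (cellp σ n).1 ≤ (cellp σ (n + 1)).1 ∧ (cellp σ (n + 1)).2 ≤ (cellp σ n).2 := by
  rw [cellp_succ]
  cases hσ : σ n
  · simp only [hσ, Bool.false_eq_true, if_false]
    exact ⟨le_refl _, (mid_between (cellp_lt σ n)).2.le⟩
  · simp only [hσ, if_true]
    exact ⟨(mid_between (cellp_lt σ n)).1.le, le_refl _⟩

lemma J_mono (σ : Cant) {n m : ℕ} (h : n ≤ m) : J σ m ⊆ J σ n := by
  induction m with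
  | zero => have : n = 0 := by omega
            subst this; exact subset_rfl
  | succ m ih =>
    rcases Nat.lt_or_ge n (m + 1) with h' | h'
    · refine Set.Subset.trans ?_ (ih (by omega))
      intro q hq
      exact ⟨lt_of_le_of_lt (cellp_nested σ m).1 hq.1, lt_of_lt_of_le hq.2 (cellp_nested σ m).2⟩
    · have : n = m + 1 := by omega
      subst this; exact subset_rfl

lemma isOpen_lt_set (a : Ext) : IsOpen {q : ℚ | a < eQ q} := by
  by_cases hb : a = ⊥
  · subst hb
    have : {q : ℚ | (⊥ : Ext) < eQ q} = Set.univ := by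
      ext q; simp [bot_lt_eQ q]
    rw [this]; exact isOpen_univ
  · by_cases ht : a = ⊤
    · subst ht
      have : {q : ℚ | (⊤ : Ext) < eQ q} = ∅ := by
        ext q
        simp only [Set.mem_setOf_eq, Set.mem_empty_iff_false, iff_false]
        exact not_top_lt
      rw [this]; exact isOpen_empty
    · obtain ⟨p, rfl⟩ := ext_fin hb ht
      have : {q : ℚ | eQ p < eQ q} = Set.Ioi p := by
        ext q; exact eQ_lt_eQ
      rw [this]; exact isOpen_Ioi

lemma isOpen_gt_set (b : Ext) : IsOpen {q : ℚ | eQ q < b} := by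
  by_cases ht : b = ⊤
  · subst ht
    have : {q : ℚ | eQ q < (⊤ : Ext)} = Set.univ := by
      ext q; simp [eQ_lt_top q]
    rw [this]; exact isOpen_univ
  · by_cases hb : b = ⊥
    · subst hb
      have : {q : ℚ | eQ q < (⊥ : Ext)} = ∅ := by
        ext q
        simp only [Set.mem_setOf_eq, Set.mem_empty_iff_false, iff_false]
        exact not_lt_bot
      rw [this]; exact isOpen_empty
    · obtain ⟨p, rfl⟩ := ext_fin hb ht
      have : {q : ℚ | eQ q < eQ p} = Set.Iio p := by
        ext q; exact eQ_lt_eQ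
      rw [this]; exact isOpen_Iio

lemma isOpen_Jp (p : Ext × Ext) : IsOpen (Jp p) :=
  (isOpen_lt_set p.1).inter (isOpen_gt_set p.2)

lemma isOpen_J (σ : Cant) (n : ℕ) : IsOpen (J σ n) := isOpen_Jp _

lemma Jp_nonempty {p : Ext × Ext} (h : p.1 < p.2) : (Jp p).Nonempty :=
  ⟨mid p.1 p.2, mid_between h⟩

lemma J_nonempty (σ : Cant) (n : ℕ) : (J σ n).Nonempty := Jp_nonempty (cellp_lt σ n)

noncomputable def codep (q : ℚ) : ℕ → Ext × Ext
  | 0 => (⊥, ⊤)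
  | n + 1 =>
    let p := codep q n
    if mid p.1 p.2 < q then (eQ (mid p.1 p.2), p.2) else (p.1, eQ (mid p.1 p.2))

noncomputable def branch (q : ℚ) : Cant := fun n =>
  decide (mid (codep q n).1 (codep q n).2 < q)

lemma codep_succ (q : ℚ) (n : ℕ) : codep q (n + 1) =
    if mid (codep q n).1 (codep q n).2 < q
    then (eQ (mid (codep q n).1 (codep q n).2), (codep q n).2)
    else ((codep q n).1, eQ (mid (codep q n).1 (codep q n).2)) := rfl

lemma cellp_branch (q : ℚ) : ∀ n, cellp (branch q) n = codep q n := by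
  intro n
  induction n with
  | zero => rfl
  | succ n ih =>
    rw [cellp_succ, codep_succ, ih]
    by_cases h : mid (codep q n).1 (codep q n).2 < q <;> simp [branch, h]

lemma codep_invar (q : ℚ) : ∀ n, (codep q n).1 < eQ q ∧ eQ q ≤ (codep q n).2 := by
  intro n
  induction n with
  | zero => exact ⟨bot_lt_eQ q, le_top⟩
  | succ n ih =>
    rw [codep_succ]
    by_cases h : mid (codep q n).1 (codep q n).2 < q
    · rw [if_pos h]
      exact ⟨eQ_lt_eQ.2 h, ih.2⟩
    · rw [if_neg h]
      push_neg at h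
      exact ⟨ih.1, eQ_le_eQ.2 h⟩

lemma codep_lt (q : ℚ) (n : ℕ) : (codep q n).1 < (codep q n).2 :=
  lt_of_lt_of_le (codep_invar q n).1 (codep_invar q n).2

lemma branch_uniq {q : ℚ} {σ : Cant} : ∀ {n}, q ∈ J σ n → ∀ i, i < n → σ i = branch q i := by
  intro n
  induction n with
  | zero => intro _ i hi; omega
  | succ n ih =>
    intro hq i hi
    have hqn : q ∈ J σ n := J_mono σ (by omega) hq
    rcases Nat.lt_or_ge i n with h' | h'
    · exact ih hqn i h'
    · have hin : i = n := by omega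
      rw [hin]
      have hcell : cellp σ n = codep q n := by
        rw [cellp_congr (fun j hj => ih hqn j hj), cellp_branch]
      have hq' : q ∈ J σ (n + 1) := hq
      rw [J, cellp_succ, hcell] at hq'
      rw [branch]
      by_cases h : mid (codep q n).1 (codep q n).2 < q
      · rw [decide_eq_true h]
        cases hσ2 : σ n
        · rw [hσ2] at hq'
          simp only [Bool.false_eq_true, if_false] at hq'
          have h2 : q < mid (codep q n).1 (codep q n).2 := eQ_lt_eQ.1 hq'.2
          exact absurd (h2.trans h) (lt_irrefl q)
        · rfl
      · rw [decide_eq_false h]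
        cases hσ2 : σ n
        · rfl
        · rw [hσ2] at hq'
          simp only [if_true] at hq'
          have h2 : mid (codep q n).1 (codep q n).2 < q := eQ_lt_eQ.1 hq'.1
          exact absurd h2 h

lemma codep_fst_stay (q : ℚ) {n : ℕ} (h : (codep q n).1 ≠ ⊥) : (codep q (n + 1)).1 ≠ ⊥ := by
  rw [codep_succ]
  by_cases hm : mid (codep q n).1 (codep q n).2 < q
  · rw [if_pos hm]; exact eQ_ne_bot _
  · rw [if_neg hm]; exact h

lemma codep_snd_stay (q : ℚ) {n : ℕ} (h : (codep q n).2 ≠ ⊤) : (codep q (n + 1)).2 ≠ ⊤ := by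
  rw [codep_succ]
  by_cases hm : mid (codep q n).1 (codep q n).2 < q
  · rw [if_pos hm]; exact h
  · rw [if_neg hm]; exact eQ_ne_top _

lemma codep_snd_fin (q : ℚ) : ∃ n, (codep q n).2 ≠ ⊤ := by
  by_contra hc
  push_neg at hc
  -- then the lower end keeps increasing by 1 forever
  have h1 : codep q 1 = (eQ 0, ⊤) := by
    have h0 : codep q 0 = ((⊥ : Ext), (⊤ : Ext)) := rfl
    rw [codep_succ, h0]
    by_cases hm : mid (⊥ : Ext) (⊤ : Ext) < q
    · rw [if_pos hm]
      have : mid (⊥ : Ext) (⊤ : Ext) = 0 := by rw [mid]; simp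
      rw [this]
    · exfalso
      have h3 := hc 1
      rw [codep_succ, h0, if_neg hm] at h3
      exact eQ_ne_top _ h3
  have key : ∀ k : ℕ, codep q (1 + k) = (eQ (k : ℚ), ⊤) := by
    intro k
    induction k with
    | zero => simpa using h1
    | succ k ih =>
      have h2 : codep q (1 + (k + 1)) = codep q ((1 + k) + 1) := rfl
      rw [h2, codep_succ, ih]
      have hm : mid (eQ (k : ℚ)) (⊤ : Ext) = (k : ℚ) + 1 := by
        rw [mid]
        rw [if_neg (eQ_ne_bot _), if_pos rfl, toQ_eQ]
      by_cases hq : ((k : ℚ) + 1) < q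
      · rw [hm, if_pos hq]
        norm_num
      · exfalso
        have h3 := hc ((1 + k) + 1)
        rw [codep_succ, ih, hm, if_neg hq] at h3
        exact eQ_ne_top _ h3
  obtain ⟨k, hk⟩ := exists_nat_gt q
  have h4 := (codep_invar q (1 + k)).1
  rw [key k] at h4
  have h5 : (k : ℚ) < q := eQ_lt_eQ.1 h4
  linarith

lemma codep_both_fin (q : ℚ) : ∃ n, (codep q n).1 ≠ ⊥ ∧ (codep q n).2 ≠ ⊤ := by
  obtain ⟨n₀, hn₀⟩ := codep_snd_fin q
  have hsnd : ∀ k, (codep q (n₀ + k)).2 ≠ ⊤ := by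
    intro k
    induction k with
    | zero => simpa using hn₀
    | succ k ih => exact codep_snd_stay q ih
  by_contra hc
  push_neg at hc
  have hfst : ∀ k, (codep q (n₀ + k)).1 = ⊥ := by
    intro k
    by_contra hne
    exact hsnd k (hc (n₀ + k) hne)
  have hsndb : (codep q n₀).2 ≠ ⊥ := by
    intro hb
    have h2 := (codep_invar q n₀).2
    rw [hb] at h2
    exact eQ_ne_bot q (le_bot_iff.1 h2)
  obtain ⟨b, hbeq⟩ := ext_fin hsndb hn₀
  have hmid : ∀ b' : ℚ, mid (⊥ : Ext) (eQ b') = b' - 1 := by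
    intro b'
    rw [mid, if_pos rfl, if_neg (eQ_ne_top _), toQ_eQ]
  have key : ∀ k : ℕ, codep q (n₀ + k) = (⊥, eQ (b - k)) := by
    intro k
    induction k with
    | zero =>
      have e1 : (codep q (n₀ + 0)).1 = ⊥ := hfst 0
      have e2 : (codep q (n₀ + 0)).2 = eQ b := by rw [Nat.add_zero]; exact hbeq
      have : codep q (n₀ + 0) = ((codep q (n₀ + 0)).1, (codep q (n₀ + 0)).2) := rfl
      rw [this, e1, e2]
      norm_num
    | succ k ih =>
      have h2 : n₀ + (k + 1) = (n₀ + k) + 1 := by omega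
      by_cases hq : (b - k - 1) < q
      · exfalso
        have h3 := hfst (k + 1)
        rw [h2, codep_succ, ih] at h3
        simp only [hmid] at h3
        rw [if_pos (by exact hq)] at h3
        exact eQ_ne_bot _ h3
      · rw [h2, codep_succ, ih]
        simp only [hmid]
        rw [if_neg hq]
        have : b - (k : ℚ) - 1 = b - ((k : ℚ) + 1) := by ring
        rw [this]
        norm_num
  obtain ⟨k, hk⟩ := exists_nat_gt (b - q)
  have h4 := (codep_invar q (n₀ + k)).2
  rw [key k] at h4
  have h5 : q ≤ b - k := eQ_le_eQ.1 h4
  have : (k : ℚ) < b - q := by linarith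
  linarith

lemma codep_halve {q a b : ℚ} {n : ℕ} (h : codep q n = (eQ a, eQ b)) :
    ∃ a' b', codep q (n + 1) = (eQ a', eQ b') ∧ b' - a' = (b - a) / 2 ∧ a ≤ a' ∧ b' ≤ b := by
  have hm : mid (codep q n).1 (codep q n).2 = (a + b) / 2 := by
    rw [h, mid]
    rw [if_neg (eQ_ne_bot _), if_neg (eQ_ne_top _), toQ_eQ, toQ_eQ]
  have hab : a < b := by
    have := codep_lt q n
    rw [h] at this
    exact eQ_lt_eQ.1 this
  rw [codep_succ, hm, h]
  by_cases hq : (a + b) / 2 < q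
  · rw [if_pos hq]
    exact ⟨(a + b) / 2, b, rfl, by ring, by linarith, le_refl b⟩
  · rw [if_neg hq]
    exact ⟨a, (a + b) / 2, rfl, by ring, le_refl a, by linarith⟩

lemma codep_small (q : ℚ) {ε : ℚ} (hε : 0 < ε) :
    ∃ n, ∀ r, r ∈ Jp (codep q n) → |r - q| < ε := by
  obtain ⟨n₁, hf, ht⟩ := codep_both_fin q
  obtain ⟨a, ha⟩ := ext_fin hf (ne_top_of_lt (codep_lt q n₁))
  have hsndb : (codep q n₁).2 ≠ ⊥ := by
    intro hbot
    have h2 := codep_lt q n₁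
    rw [hbot] at h2
    exact not_lt_bot h2
  obtain ⟨b, hb⟩ := ext_fin hsndb ht
  have hpair : codep q n₁ = (eQ a, eQ b) := by
    have h0 : codep q n₁ = ((codep q n₁).1, (codep q n₁).2) := rfl
    rw [h0, ← ha, ← hb]
  have key : ∀ k, ∃ a' b', codep q (n₁ + k) = (eQ a', eQ b') ∧ b' - a' = (b - a) / 2 ^ k := by
    intro k
    induction k with
    | zero => exact ⟨a, b, by simpa using hpair, by simp⟩
    | succ k ih =>
      obtain ⟨a', b', hp, hd⟩ := ih
      obtain ⟨a'', b'', hp2, hd2, _, _⟩ := codep_halve hp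
      refine ⟨a'', b'', by rw [show n₁ + (k + 1) = (n₁ + k) + 1 by omega]; exact hp2, ?_⟩
      rw [hd2, hd]; ring
  obtain ⟨k, hk⟩ := pow_unbounded_of_one_lt ((b - a) / ε) (show (1:ℚ) < 2 by norm_num)
  obtain ⟨a', b', hp, hd⟩ := key k
  refine ⟨n₁ + k, ?_⟩
  intro r hr
  rw [hp] at hr
  have h1 : a' < r := eQ_lt_eQ.1 hr.1
  have h2 : r < b' := eQ_lt_eQ.1 hr.2
  have hinv := codep_invar q (n₁ + k)
  rw [hp] at hinv
  have h3 : a' < q := eQ_lt_eQ.1 hinv.1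
  have h4 : q ≤ b' := eQ_le_eQ.1 hinv.2
  have hlen : b' - a' < ε := by
    rw [hd, div_lt_iff₀ (by positivity)]
    have h5 := (div_lt_iff₀ hε).1 hk
    rw [mul_comm] at h5
    linarith
  rw [abs_sub_lt_iff]
  constructor <;> linarith

lemma cell_in_open {τ : Cant} {n₀ : ℕ} {q c d : ℚ} (hq : q ∈ J τ n₀) (hc : c < q) (hd : q < d) :
    ∃ n, n₀ ≤ n ∧ (∀ i, i < n₀ → branch q i = τ i) ∧ J (branch q) n ⊆ Set.Ioo c d := by
  have hagree : ∀ i, i < n₀ → branch q i = τ i := fun i hi => (branch_uniq hq i hi).symm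
  have hε : 0 < min (q - c) (d - q) := lt_min (by linarith) (by linarith)
  obtain ⟨n₁, hn₁⟩ := codep_small q hε
  refine ⟨max n₀ n₁, le_max_left _ _, hagree, ?_⟩
  intro r hr
  have hr' : r ∈ Jp (codep q n₁) := by
    have hsub : J (branch q) (max n₀ n₁) ⊆ J (branch q) n₁ := J_mono _ (le_max_right _ _)
    have h5 := hsub hr
    rwa [J, cellp_branch] at h5
  have h6 := hn₁ r hr'
  rw [abs_sub_lt_iff] at h6
  have hm1 : min (q - c) (d - q) ≤ q - c := min_le_left _ _
  have hm2 : min (q - c) (d - q) ≤ d - q := min_le_right _ _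
  exact ⟨by linarith [h6.1, h6.2], by linarith [h6.1, h6.2]⟩

lemma exists_cell_avoiding {A : Set ℚ} (hA : IsNowhereDense A) (τ : Cant) (n₀ : ℕ) :
    ∃ (σ : Cant) (n : ℕ), n₀ ≤ n ∧ (∀ i, i < n₀ → σ i = τ i) ∧ J σ n ∩ A = ∅ := by
  have hnotsub : ¬ J τ n₀ ⊆ closure A := by
    intro hsub
    have h2 : J τ n₀ ⊆ interior (closure A) := interior_maximal hsub (isOpen_J τ n₀)
    rw [hA] at h2
    obtain ⟨q, hq⟩ := J_nonempty τ n₀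
    exact h2 hq
  obtain ⟨q, hqJ, hqA⟩ := Set.not_subset.1 hnotsub
  have hmem : (closure A)ᶜ ∈ nhds q := isClosed_closure.isOpen_compl.mem_nhds hqA
  obtain ⟨l, u, hlu, hsub2⟩ := mem_nhds_iff_exists_Ioo_subset.1 hmem
  obtain ⟨n, hn₀n, hagree, hJsub⟩ := cell_in_open hqJ hlu.1 hlu.2
  refine ⟨branch q, n, hn₀n, hagree, ?_⟩
  rw [Set.eq_empty_iff_forall_notMem]
  rintro r ⟨hr1, hr2⟩
  exact hsub2 (hJsub hr1) (subset_closure hr2)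

lemma nwd_of_cells (S : Set ℚ)
    (h : ∀ U : Set ℚ, IsOpen U → U.Nonempty →
      ∃ V : Set ℚ, IsOpen V ∧ V.Nonempty ∧ V ⊆ U ∧ V ∩ S = ∅) :
    IsNowhereDense S := by
  rw [IsNowhereDense, Set.eq_empty_iff_forall_notMem]
  intro x hx
  obtain ⟨V, hVo, hVne, hVsub, hVS⟩ := h (interior (closure S)) isOpen_interior ⟨x, hx⟩
  obtain ⟨v, hv⟩ := hVne
  have hvcl : v ∈ closure S := interior_subset (hVsub hv)
  rw [mem_closure_iff] at hvcl
  obtain ⟨y, hy1, hy2⟩ := hvcl V hVo hv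
  exact Set.eq_empty_iff_forall_notMem.1 hVS y ⟨hy1, hy2⟩

lemma exists_cell_in_open {U : Set ℚ} (hU : IsOpen U) (hne : U.Nonempty) :
    ∃ (σ : Cant) (n : ℕ), J σ n ⊆ U := by
  obtain ⟨q, hq⟩ := hne
  obtain ⟨l, u, hlu, hsub⟩ := mem_nhds_iff_exists_Ioo_subset.1 (hU.mem_nhds hq)
  have hq0 : q ∈ J (fun _ => false) 0 := ⟨bot_lt_eQ q, eQ_lt_top q⟩
  obtain ⟨n, _, _, hJsub⟩ := cell_in_open hq0 hlu.1 hlu.2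
  exact ⟨branch q, n, hJsub.trans hsub⟩

lemma not_hit_of_mem {q : ℚ} {σ : Cant} {n j : ℕ} (hq : q ∈ J σ n) (hj : j < n) :
    q ≠ mid (codep q j).1 (codep q j).2 := by
  intro heq
  have hagree := branch_uniq hq
  have hq' : q ∈ J σ (j + 1) := J_mono σ (by omega) hq
  rw [J, cellp_congr (fun i hi => hagree i (by omega)), cellp_branch, codep_succ] at hq'
  have hnlt : ¬ mid (codep q j).1 (codep q j).2 < q := by
    rw [← heq]; exact lt_irrefl q
  rw [if_neg hnlt] at hq'
  have h2 : eQ q < eQ (mid (codep q j).1 (codep q j).2) := hq'.2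
  rw [← heq] at h2
  exact lt_irrefl _ h2



lemma escape_word (C : Set Cant) (hC : IsClosed C) (hCn : IsNowhereDense C) (n : ℕ)
    (S : Finset (Fin n → Bool)) :
    ∃ (k : ℕ) (u : ℕ → Bool), ∀ s ∈ S, ∀ x : Cant,
      (∀ (i : ℕ) (hi : i < n), x i = s ⟨i, hi⟩) → (∀ j, j < k → x (n + j) = u j) → x ∉ C := by
  classical
  induction S using Finset.induction_on with
  | empty => exact ⟨0, fun _ => false, by simp⟩
  | @insert a S ha ih =>
    obtain ⟨k, u, hku⟩ := ih
    set z₀ : Cant := fun j => if h : j < n then a ⟨j, h⟩ else u (j - n) with hz₀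
    have hnot : ¬ cyl (n + k) z₀ ⊆ C := by
      intro hsub
      have h2 : cyl (n + k) z₀ ⊆ interior (closure C) :=
        interior_maximal (hsub.trans subset_closure) (isOpen_cyl _ _)
      rw [hCn] at h2
      exact h2 (self_mem_cyl _ _)
    obtain ⟨z, hz, hzC⟩ := Set.not_subset.1 hnot
    obtain ⟨m, hm⟩ := exists_cyl_subset hC.isOpen_compl (show z ∈ Cᶜ from hzC)
    refine ⟨k + m, fun j => z (n + j), ?_⟩
    intro s hs x hcell hword
    rcases Finset.mem_insert.1 hs with rfl | hsS
    · -- s = a : show x ∈ cyl m z hence ∉ C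
      refine hm (fun i hi => ?_)
      by_cases hin : i < n
      · rw [hcell i hin]
        have := hz i (by omega)
        rw [this]; simp [hz₀, hin]
      · have hik : i - n < k + m := by omega
        have h1 : x (n + (i - n)) = z (n + (i - n)) := hword (i - n) hik
        rw [show n + (i - n) = i by omega] at h1
        exact h1
    · refine hku s hsS x hcell (fun j hj => ?_)
      have h1 : x (n + j) = z (n + j) := hword j (by omega)
      have h2 : z (n + j) = z₀ (n + j) := hz (n + j) (by omega)
      rw [h1, h2]; simp [hz₀]

lemma cover_lemma {F : Set Cant} (hF : IsMeagre F) :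
    ∃ (h : ℕ → ℕ) (x₁ : Cant), StrictMono h ∧ h 0 = 0 ∧
      ∀ x : Cant, (∀ N, ∃ i, N ≤ i ∧ ∀ j, h i ≤ j → j < h (i + 1) → x j = x₁ j) → x ∉ F := by
  classical
  obtain ⟨S, hS, hScnt, hsub⟩ := isMeagre_iff_countable_union_isNowhereDense.1 hF
  rcases S.eq_empty_or_nonempty with rfl | hne
  · refine ⟨id, fun _ => false, strictMono_id, rfl, fun x _ hx => ?_⟩
    have := hsub hx; simpa using this
  obtain ⟨f, rfl⟩ := Set.Countable.exists_eq_range hScnt hne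
  -- partial unions of closures
  set D : ℕ → Set Cant := fun i => Nat.rec (closure (f 0))
    (fun i' Di => Di ∪ closure (f (i' + 1))) i with hD
  have hDcl : ∀ i, IsClosed (D i) := by
    intro i; induction i with
    | zero => exact isClosed_closure
    | succ i ih => exact ih.union isClosed_closure
  have hDnwd : ∀ i, IsNowhereDense (D i) := by
    intro i; induction i with
    | zero => exact (hS _ ⟨0, rfl⟩).closure
    | succ i ih =>
      exact nwd_union_closed (hDcl i) isClosed_closure ih (hS _ ⟨i + 1, rfl⟩).closure
  have hDmono : ∀ i i', i ≤ i' → D i ⊆ D i' := by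
    intro i i' hii'
    induction i' with
    | zero => have : i = 0 := by omega
              subst this; exact subset_rfl
    | succ i' ih =>
      rcases Nat.lt_or_ge i (i' + 1) with h | h
      · exact (ih (by omega)).trans Set.subset_union_left
      · have : i = i' + 1 := by omega
        subst this; exact subset_rfl
  have hfD : ∀ j, f j ⊆ D j := by
    intro j
    have : closure (f j) ⊆ D j := by
      cases j with
      | zero => exact subset_rfl
      | succ j => exact Set.subset_union_right
    exact subset_closure.trans this
  -- escape words
  have key : ∀ i n : ℕ, ∃ (k : ℕ) (u : ℕ → Bool), ∀ (s : Fin n → Bool), ∀ x : Cant,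
      (∀ (j : ℕ) (hj : j < n), x j = s ⟨j, hj⟩) → (∀ j, j < k → x (n + j) = u j) →
      x ∉ D i := by
    intro i n
    obtain ⟨k, u, hku⟩ := escape_word (D i) (hDcl i) (hDnwd i) n Finset.univ
    exact ⟨k, u, fun s => hku s (Finset.mem_univ s)⟩
  choose K U hKU using key
  set st : ℕ → ℕ × Cant := fun i => Nat.rec ((0, fun _ => false) : ℕ × Cant)
    (fun i' p => (p.1 + K i' p.1 + 1,
      fun j => if j < p.1 then p.2 j else if j < p.1 + K i' p.1 then U i' p.1 (j - p.1)
        else false)) i with hst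
  set h : ℕ → ℕ := fun i => (st i).1 with hh
  have hsucc : ∀ i, h (i + 1) = h i + K i (h i) + 1 := fun i => rfl
  have hmono : StrictMono h := strictMono_nat_of_lt_succ (fun i => by rw [hsucc]; omega)
  have hstable : ∀ i i', i ≤ i' → ∀ j, j < h i → (st i').2 j = (st i).2 j := by
    intro i i' hii'
    induction i' with
    | zero => intro j hj
              have : i = 0 := by omega
              subst this; rfl
    | succ i' ih =>
      intro j hj
      rcases Nat.lt_or_ge i (i' + 1) with hlt | hge
      · have hji' : j < h i' := lt_of_lt_of_le hj (hmono.le_iff_le.2 (by omega))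
        have : (st (i' + 1)).2 j = (st i').2 j := by
          show (if j < (st i').1 then (st i').2 j else _) = (st i').2 j
          rw [if_pos hji']
        rw [this]; exact ih (by omega) j hj
      · have : i = i' + 1 := by omega
        subst this; rfl
  set x₁ : Cant := fun j => (st (j + 1)).2 j with hx₁
  have hige : ∀ i, i ≤ h i := by
    intro i; induction i with
    | zero => omega
    | succ i ih => rw [hsucc]; omega
  have hx₁eq : ∀ i j, h i ≤ j → j < h (i + 1) → x₁ j = (st (i + 1)).2 j := by
    intro i j h1 h2
    have hji : i + 1 ≤ j + 1 := by
      have := hige i; omega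
    exact hstable (i + 1) (j + 1) hji j h2
  refine ⟨h, x₁, hmono, rfl, ?_⟩
  intro x hx hxF
  obtain ⟨jj, hjj⟩ : ∃ j, x ∈ f j := by
    have := hsub hxF
    simpa using this
  obtain ⟨i, hij, hmatch⟩ := hx jj
  have hxDi : x ∈ D i := hDmono jj i hij (hfD jj hjj)
  have e1 : (st i).1 = h i := rfl
  have e2 : h (i + 1) = h i + K i (h i) + 1 := hsucc i
  have e3 : K i (st i).1 = K i (h i) := rfl
  refine hKU i (h i) (fun p => x p.1) x (fun j hj => rfl) ?_ hxDi
  intro j hj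
  have h1 : x (h i + j) = x₁ (h i + j) := hmatch (h i + j) (by omega) (by omega)
  have h2 : x₁ (h i + j) = (st (i + 1)).2 (h i + j) :=
    hx₁eq i (h i + j) (by omega) (by omega)
  rw [h1, h2]
  show (if h i + j < (st i).1 then _ else if h i + j < (st i).1 + K i (st i).1 then
    U i (st i).1 (h i + j - (st i).1) else false) = U i (h i) j
  rw [if_neg (by omega), if_pos (by omega)]
  congr 1
  omega



def cg (g : ℕ → ℕ) : ℕ → ℕ
  | 0 => 0
  | n + 1 => cg g n + g n + 5

def Mg (g : ℕ → ℕ) : Set Cant := {x | ∀ n, x (cg g n) ≠ x (cg g n + 1)}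

lemma cg_lt_succ (g : ℕ → ℕ) (n : ℕ) : cg g n + g n + 5 = cg g (n + 1) := rfl

lemma cg_ge (g : ℕ → ℕ) : ∀ n, n ≤ cg g n := by
  intro n; induction n with
  | zero => omega
  | succ n ih => rw [← cg_lt_succ]; omega

lemma cg_strictMono (g : ℕ → ℕ) : StrictMono (cg g) :=
  strictMono_nat_of_lt_succ (fun n => by rw [← cg_lt_succ]; omega)

lemma isClosed_Mg (g : ℕ → ℕ) : IsClosed (Mg g) := by
  rw [← isOpen_compl_iff, isOpen_iff_forall_mem_open]
  intro x hx
  have hx' : ∃ n, x (cg g n) = x (cg g n + 1) := by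
    by_contra hc
    push_neg at hc
    exact hx hc
  obtain ⟨n, hn⟩ := hx'
  refine ⟨cyl (cg g n + 2) x, fun y hy hyM => hyM n ?_, isOpen_cyl _ _, self_mem_cyl _ _⟩
  rw [hy _ (by omega), hy _ (by omega)]
  exact hn

lemma nwd_Mg (g : ℕ → ℕ) : IsNowhereDense (Mg g) := by
  rw [(isClosed_Mg g).isNowhereDense_iff, Set.eq_empty_iff_forall_notMem]
  intro x hx
  obtain ⟨n, hn⟩ := exists_cyl_subset isOpen_interior hx
  set N := n with hN
  set y : Cant := fun j => if j = cg g N + 1 then x (cg g N) else x j with hy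
  have hyc : y ∈ cyl n x := by
    intro i hi
    have : i ≠ cg g N + 1 := by
      have := cg_ge g N; omega
    simp [hy, this]
  have hyM : y ∈ Mg g := interior_subset (hn hyc)
  apply hyM N
  have h1 : y (cg g N) = x (cg g N) := by
    have : cg g N ≠ cg g N + 1 := by omega
    simp [hy, this]
  have h2 : y (cg g N + 1) = x (cg g N) := by simp [hy]
  rw [h1, h2]

lemma extraction (h' : ℕ → ℕ) (hm : StrictMono h') (h0 : h' 0 = 0) (x₁ : Cant) (g : ℕ → ℕ)
    (hcov : ∀ x : Cant,
      (∀ N, ∃ i, N ≤ i ∧ ∀ j, h' i ≤ j → j < h' (i + 1) → x j = x₁ j) → x ∉ Mg g) :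
    ∃ K, ∀ m, K ≤ m → g m ≤ h' (8 * m + 8) := by
  classical
  set c := cg g with hc
  have hcmono := cg_strictMono g
  have hle : ∀ j, j ≤ h' j := fun j => hm.le_apply
  have hadd : ∀ a k, h' a + k ≤ h' (a + k) := by
    intro a k; induction k with
    | zero => simp
    | succ k ih =>
      have h1 : h' (a + k) < h' (a + k + 1) := hm (by omega)
      have h2 : h' (a + (k + 1)) = h' (a + k + 1) := rfl
      omega
  set Q : ℕ → Prop := fun m => ∃ j, c m + 2 ≤ h' j ∧ h' (j + 1) + 2 ≤ c (m + 1) with hQdef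
  by_cases hQ : ∀ N, ∃ m, N ≤ m ∧ Q m
  · -- CASE 1 : impossible
    exfalso
    set jm : ℕ → ℕ := fun m => if h : Q m then h.choose else 0 with hjm
    have hjmspec : ∀ m, Q m → c m + 2 ≤ h' (jm m) ∧ h' (jm m + 1) + 2 ≤ c (m + 1) := by
      intro m hQm
      simp only [hjm, dif_pos hQm]
      exact hQm.choose_spec
    set x : Cant := fun i =>
      if ∃ m, Q m ∧ h' (jm m) ≤ i ∧ i < h' (jm m + 1) then x₁ i else decide (i % 2 = 0)
      with hxdef
    have hfree : ∀ i m, Q m → h' (jm m) ≤ i → i < h' (jm m + 1) →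
        (∀ n, i ≠ c n ∧ i ≠ c n + 1) := by
      intro i m hQm h1 h2 n
      obtain ⟨ha, hb⟩ := hjmspec m hQm
      have hx1 : c m + 2 ≤ i := le_trans ha h1
      have hx2 : i + 2 ≤ c (m + 1) := by omega
      constructor
      · intro rfl'
        rcases Nat.lt_or_ge n (m + 1) with h | h
        · have : c n ≤ c m := hcmono.le_iff_le.2 (by omega)
          omega
        · have : c (m + 1) ≤ c n := hcmono.le_iff_le.2 h
          omega
      · intro heq
        rcases Nat.lt_or_ge n (m + 1) with h | h
        · have : c n ≤ c m := hcmono.le_iff_le.2 (by omega)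
          omega
        · have : c (m + 1) ≤ c n := hcmono.le_iff_le.2 h
          omega
    have hxM : x ∈ Mg g := by
      intro n
      have e1 : x (c n) = decide (c n % 2 = 0) := by
        rw [hxdef]
        simp only []
        rw [if_neg]
        rintro ⟨m, hQm, h1, h2⟩
        exact (hfree (c n) m hQm h1 h2 n).1 rfl
      have e2 : x (c n + 1) = decide ((c n + 1) % 2 = 0) := by
        rw [hxdef]
        simp only []
        rw [if_neg]
        rintro ⟨m, hQm, h1, h2⟩
        exact (hfree (c n + 1) m hQm h1 h2 n).2 rfl
      rw [e1, e2]
      intro hdec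
      rw [decide_eq_decide] at hdec
      omega
    have hxmatch : ∀ N, ∃ i, N ≤ i ∧ ∀ j, h' i ≤ j → j < h' (i + 1) → x j = x₁ j := by
      intro N
      obtain ⟨m, hmN, hQm⟩ := hQ (h' N)
      refine ⟨jm m, ?_, ?_⟩
      · obtain ⟨ha, _⟩ := hjmspec m hQm
        have h1 : h' N < h' (jm m) := by
          have : h' N ≤ m := hmN
          have : m ≤ c m := cg_ge g m
          omega
        have := hm.lt_iff_lt.1 h1
        omega
      · intro j h1 h2
        rw [hxdef]
        simp only []
        rw [if_pos ⟨m, hQm, h1, h2⟩]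
    exact hcov x hxmatch hxM
  · -- CASE 2 : counting
    push_neg at hQ
    obtain ⟨N₀, hN₀⟩ := hQ
    have hstep : ∀ m, N₀ ≤ m → ∀ nn, c m ≤ h' nn → c (m + 1) ≤ h' (nn + 6) := by
      intro m hmN nn hcm
      by_contra hcon
      push_neg at hcon
      obtain ⟨m', hm', hQm'⟩ : ∃ m', N₀ ≤ m' ∧ Q m' := by
        refine ⟨m, hmN, ⟨nn + 3, ?_, ?_⟩⟩
        · have := hadd nn 3; omega
        · have h4 : h' (nn + 4) + 2 ≤ h' (nn + 6) := by
            have h5 := hadd (nn + 4) 2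
            have h6 : nn + 4 + 2 = nn + 6 := by omega
            rw [h6] at h5; exact h5
          have h7 : h' (nn + 3 + 1) = h' (nn + 4) := by norm_num
          omega
      exact hN₀ m' hm' hQm'
    have hind : ∀ t, c (N₀ + t) ≤ h' (c N₀ + 6 * t) := by
      intro t; induction t with
      | zero => simpa using hle (c N₀)
      | succ t ih =>
        have := hstep (N₀ + t) (by omega) (c N₀ + 6 * t) ih
        have heq : N₀ + t + 1 = N₀ + (t + 1) := by omega
        rw [heq] at this
        have heq2 : c N₀ + 6 * t + 6 = c N₀ + 6 * (t + 1) := by omega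
        rwa [heq2] at this
    refine ⟨c N₀ + N₀ + 8, fun m hmK => ?_⟩
    have h1 : g m < c (m + 1) := by
      have h5 := cg_lt_succ g m
      rw [← hc] at h5
      omega
    have h2 : c (m + 1) = c (N₀ + (m + 1 - N₀)) := by congr 1; omega
    have h3 : c (m + 1) ≤ h' (c N₀ + 6 * (m + 1 - N₀)) := by rw [h2]; exact hind _
    have h4 : h' (c N₀ + 6 * (m + 1 - N₀)) ≤ h' (8 * m + 8) := by
      apply hm.le_iff_le.2
      omega
    omega


/-! ### The main bound -/

lemma main_bound (𝒜 : Set (Set ℚ)) (h𝒜 : 𝒜 ⊆ nwdIdeal)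
    (hP : ∀ X : ℕ → Set ℚ, (∀ n, X n ∈ nwdIdeal) → ∃ A ∈ 𝒜, ∀ n, (A \ X n).Infinite) :
    addMeager ≤ #𝒜 := by
  classical
  by_contra hlt
  push_neg at hlt
  -- every 𝒜-indexed family of meagre subsets of Cantor space has meagre union
  have hUnion : ∀ M : 𝒜 → Set Cant, (∀ a, IsMeagre (M a)) → IsMeagre (⋃ a, M a) := by
    intro M hM
    by_contra hnm
    have hmem : addMeager ≤ #(Set.range M) := by
      apply csInf_le'
      refine ⟨Set.range M, ?_, ?_, rfl⟩
      · rintro B ⟨a, rfl⟩; exact hM a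
      · rwa [Set.sUnion_range]
    exact absurd (hmem.trans mk_range_le) (not_le.2 hlt)
  -- the closed nowhere dense trace sets
  set MA : 𝒜 → Set Cant := fun a => {x | ∀ n, ((a : Set ℚ) ∩ J x n).Nonempty} with hMAdef
  have hMAcl : ∀ a, IsClosed (MA a) := by
    intro a
    rw [← isOpen_compl_iff, isOpen_iff_forall_mem_open]
    intro x hx
    have hx' : ∃ n, ¬ ((a : Set ℚ) ∩ J x n).Nonempty := by
      by_contra hco
      push_neg at hco
      exact hx (fun n => hco n)
    obtain ⟨n, hn⟩ := hx'
    refine ⟨cyl n x, ?_, isOpen_cyl n x, self_mem_cyl n x⟩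
    intro y hy hyM
    apply hn
    have h2 := hyM n
    rwa [J_congr (fun i hi => hy i hi)] at h2
  have hMAnwd : ∀ a, IsNowhereDense (MA a) := by
    intro a
    rw [(hMAcl a).isNowhereDense_iff, Set.eq_empty_iff_forall_notMem]
    intro x hx
    obtain ⟨n₀, hn₀⟩ := exists_cyl_subset isOpen_interior hx
    obtain ⟨σ, n, hn, hagree, hJA⟩ := exists_cell_avoiding (h𝒜 a.2) x n₀
    have hσM : σ ∈ MA a := interior_subset (hn₀ (fun i hi => hagree i hi))
    obtain ⟨q, hq1, hq2⟩ := hσM n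
    exact Set.eq_empty_iff_forall_notMem.1 hJA q ⟨hq2, hq1⟩
  have hmeag1 : IsMeagre (⋃ a, MA a) :=
    hUnion MA (fun a => nwd_isMeagre (hMAnwd a))
  obtain ⟨h, x₁, hmono, h0, hcov⟩ := cover_lemma hmeag1
  have hcovA : ∀ (a : 𝒜) (x : Cant),
      (∀ N, ∃ i, N ≤ i ∧ ∀ j, h i ≤ j → j < h (i + 1) → x j = x₁ j) → x ∉ MA a :=
    fun a x hx hmem => hcov x hx (Set.mem_iUnion.2 ⟨a, hmem⟩)
  -- the bounding functions, via compactness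
  have hbound : ∀ (a : 𝒜) (m : ℕ), ∃ B, ∀ n,
      (∃ σ : Cant, ((a : Set ℚ) ∩ J σ n).Nonempty ∧
        (∀ i, m ≤ i → h (i + 1) ≤ n → ∀ j, h i ≤ j → j < h (i + 1) → σ j = x₁ j)) →
      n < B := by
    intro a m
    by_contra hB
    push_neg at hB
    set Kn : ℕ → Set Cant := fun n => {x | ((a : Set ℚ) ∩ J x n).Nonempty ∧
      ∀ i, m ≤ i → h (i + 1) ≤ n → ∀ j, h i ≤ j → j < h (i + 1) → x j = x₁ j} with hKndef
    have hdec : ∀ n, Kn (n + 1) ⊆ Kn n := by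
      intro n x hx
      constructor
      · obtain ⟨q, hq1, hq2⟩ := hx.1
        exact ⟨q, hq1, J_mono x (by omega) hq2⟩
      · intro i h1 h2 j h3 h4
        exact hx.2 i h1 (by omega) j h3 h4
    have hchain : ∀ n n', n ≤ n' → Kn n' ⊆ Kn n := by
      intro n n' hnn'
      induction n' with
      | zero =>
        have : n = 0 := by omega
        subst this; exact subset_rfl
      | succ n' ih =>
        rcases Nat.lt_or_ge n (n' + 1) with h' | h'
        · exact (hdec n').trans (ih (by omega))
        · have : n = n' + 1 := by omega
          subst this; exact subset_rfl
    have hne : ∀ n, (Kn n).Nonempty := by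
      intro n
      obtain ⟨n', ⟨σ, hσ1, hσ2⟩, hn'⟩ := hB n
      exact ⟨σ, hchain n n' hn' ⟨hσ1, hσ2⟩⟩
    have hcl : ∀ n, IsClosed (Kn n) := by
      intro n
      have himp : ∀ x y : Cant, (∀ i, i < n → x i = y i) → x ∈ Kn n → y ∈ Kn n := by
        intro x y hxy hx
        constructor
        · obtain ⟨q, hq1, hq2⟩ := hx.1
          refine ⟨q, hq1, ?_⟩
          rwa [J_congr (fun i hi => (hxy i hi).symm)]
        · intro i h1 h2 j h3 h4
          rw [← hxy j (by omega)]
          exact hx.2 i h1 h2 j h3 h4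
      exact isClosed_of_determined (fun x y hxy =>
        ⟨himp x y hxy, himp y x (fun i hi => (hxy i hi).symm)⟩)
    obtain ⟨xI, hxI⟩ := IsCompact.nonempty_iInter_of_sequence_nonempty_isCompact_isClosed
      Kn hdec hne ((hcl 0).isCompact) hcl
    rw [Set.mem_iInter] at hxI
    apply hcovA a xI ?_ (fun n => (hxI n).1)
    intro N
    refine ⟨max N m, le_max_left _ _, ?_⟩
    intro j hj1 hj2
    exact (hxI (h (max N m + 1))).2 (max N m) (le_max_right _ _) (le_refl _) j hj1 hj2
  choose g hg using hbound
  -- second covering, for the block sets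
  have hmeag2 : IsMeagre (⋃ a, Mg (g a)) :=
    hUnion _ (fun a => nwd_isMeagre (nwd_Mg (g a)))
  obtain ⟨h', x₁', hmono', h0', hcov'⟩ := cover_lemma hmeag2
  have hext : ∀ a : 𝒜, ∃ K, ∀ m, K ≤ m → g a m ≤ h' (8 * m + 8) := fun a =>
    extraction h' hmono' h0' x₁' (g a)
      (fun x hx hxM => hcov' x hx (Set.mem_iUnion.2 ⟨a, hxM⟩))
  choose KK hKK using hext
  set h₁ : ℕ → ℕ := fun m => h' (8 * m + 8) with hh₁
  set h₂ : ℕ → ℕ := fun m => h (m + 1) + h₁ m with hh₂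
  -- the defeating sequence of nowhere dense subsets of ℚ
  set Xs : ℕ → Set ℚ := fun k => {q | ∀ m, k ≤ m →
    ((∃ j, j < h₂ m ∧ q = mid (codep q j).1 (codep q j).2) ∨
     ∀ σ : Cant, q ∈ J σ (h₂ m) → ∃ i, m ≤ i ∧ h (i + 1) ≤ h₂ m ∧
       ∃ j, h i ≤ j ∧ j < h (i + 1) ∧ σ j ≠ x₁ j)} with hXsdef
  have hXnwd : ∀ k, IsNowhereDense (Xs k) := by
    intro k
    apply nwd_of_cells
    intro U hUo hUne
    obtain ⟨σ₀, n₀, hJU⟩ := exists_cell_in_open hUo hUne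
    set m := max k n₀ with hm
    have hm1 : k ≤ m := le_max_left _ _
    have hmn₀ : n₀ ≤ h₂ m := by
      have e1 : m ≤ h m := hmono.le_apply
      have e2 : h m < h (m + 1) := hmono (by omega)
      have e3 : n₀ ≤ m := le_max_right _ _
      have e4 : h₂ m = h (m + 1) + h₁ m := rfl
      omega
    set σ' : Cant := fun j => if j < n₀ then σ₀ j else x₁ j with hσ'
    refine ⟨J σ' (h₂ m), isOpen_J _ _, J_nonempty _ _, ?_, ?_⟩
    · have e : J σ' n₀ = J σ₀ n₀ := J_congr (fun i hi => by simp [hσ', hi])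
      exact (J_mono σ' hmn₀).trans (e ▸ hJU)
    · rw [Set.eq_empty_iff_forall_notMem]
      rintro q ⟨hqJ, hqX⟩
      rcases hqX m hm1 with ⟨j, hj, hqmid⟩ | hmm
      · exact not_hit_of_mem hqJ hj hqmid
      · obtain ⟨i, hi1, hi2, j, hj1, hj2, hj3⟩ := hmm σ' hqJ
        apply hj3
        have hn₀j : ¬ j < n₀ := by
          have e1 : m ≤ i := hi1
          have e2 : h m ≤ h i := hmono.le_iff_le.2 e1
          have e3 : n₀ ≤ m := le_max_right _ _
          have e4 : m ≤ h m := hmono.le_apply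
          omega
        simp [hσ', hn₀j]
  obtain ⟨A, hA𝒜, hAinf⟩ := hP Xs (fun k => hXnwd k)
  set a : 𝒜 := ⟨A, hA𝒜⟩ with ha
  have hsubset : A ⊆ Xs (KK a) := by
    intro q hq m hm
    by_cases hhit : ∃ j, j < h₂ m ∧ q = mid (codep q j).1 (codep q j).2
    · exact Or.inl hhit
    · right
      intro σ hqσ
      by_contra hno
      push_neg at hno
      have hlt2 : h₂ m < g a m := hg a m (h₂ m) ⟨σ, ⟨q, hq, hqσ⟩, hno⟩
      have hle : g a m ≤ h₁ m := hKK a m hm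
      have e4 : h₂ m = h (m + 1) + h₁ m := rfl
      omega
  have hinf := hAinf (KK a)
  rw [Set.diff_eq_empty.2 hsubset] at hinf
  exact Set.not_infinite.2 Set.finite_empty hinf

/-! ### Nonemptiness of the `addStarOmega` index set -/

lemma property_nwdIdeal : ∀ X : ℕ → Set ℚ, (∀ n, X n ∈ nwdIdeal) →
    ∃ A ∈ nwdIdeal, ∀ n, (A \ X n).Infinite := by
  classical
  intro X hX
  set Y : ℕ → Set ℚ := fun i => Nat.rec (closure (X 0))
    (fun i' Yi => Yi ∪ closure (X (i' + 1))) i with hY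
  have hYcl : ∀ i, IsClosed (Y i) := by
    intro i; induction i with
    | zero => exact isClosed_closure
    | succ i ih => exact ih.union isClosed_closure
  have hYnwd : ∀ i, IsNowhereDense (Y i) := by
    intro i; induction i with
    | zero => exact (hX 0).closure
    | succ i ih => exact nwd_union_closed (hYcl i) isClosed_closure ih (hX (i + 1)).closure
  have hYmono : ∀ i i', i ≤ i' → Y i ⊆ Y i' := by
    intro i i' hii'
    induction i' with
    | zero => have : i = 0 := by omega
              subst this; exact subset_rfl
    | succ i' ih =>
      rcases Nat.lt_or_ge i (i' + 1) with h | h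
      · exact (ih (by omega)).trans Set.subset_union_left
      · have : i = i' + 1 := by omega
        subst this; exact subset_rfl
  have hYsub : ∀ n i, n ≤ i → X n ⊆ Y i := by
    intro n i hni
    refine Set.Subset.trans (subset_closure.trans ?_) (hYmono n i hni)
    cases n with
    | zero => exact subset_rfl
    | succ n => exact Set.subset_union_right
  have hpick : ∀ i : ℕ, ∃ p : ℚ,
      p ∈ Set.Ioo (1 / ((i : ℚ) + 2)) (1 / ((i : ℚ) + 1)) ∧ p ∉ Y i := by
    intro i
    have hlt : (1 : ℚ) / ((i : ℚ) + 2) < 1 / ((i : ℚ) + 1) := by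
      apply one_div_lt_one_div_of_lt
      · positivity
      · linarith
    by_contra hc
    push_neg at hc
    have hsub : Set.Ioo (1 / ((i : ℚ) + 2)) (1 / ((i : ℚ) + 1)) ⊆ Y i := fun p hp => hc p hp
    have h2 : Set.Ioo (1 / ((i : ℚ) + 2)) (1 / ((i : ℚ) + 1)) ⊆ interior (Y i) :=
      interior_maximal hsub isOpen_Ioo
    rw [(hYcl i).isNowhereDense_iff.1 (hYnwd i)] at h2
    obtain ⟨p, hp⟩ := Set.nonempty_Ioo.2 hlt
    exact h2 hp
  choose p hp1 hp2 using hpick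
  have hpbd : ∀ i : ℕ, 1 / ((i : ℚ) + 2) < p i ∧ p i < 1 / ((i : ℚ) + 1) := fun i =>
    ⟨(hp1 i).1, (hp1 i).2⟩
  have hppos : ∀ i, 0 < p i := by
    intro i
    have := (hpbd i).1
    have h2 : (0 : ℚ) < 1 / ((i : ℚ) + 2) := by positivity
    linarith
  have hpinj : Function.Injective p := by
    intro i i' hii'
    by_contra hne
    rcases Nat.lt_or_ge i i' with h | h
    · have h1 : p i' < 1 / ((i' : ℚ) + 1) := (hpbd i').2
      have h2 : 1 / ((i : ℚ) + 2) < p i := (hpbd i).1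
      have h3 : 1 / ((i' : ℚ) + 1) ≤ 1 / ((i : ℚ) + 2) := by
        apply one_div_le_one_div_of_le
        · positivity
        · have : (i : ℚ) + 1 ≤ (i' : ℚ) := by exact_mod_cast Nat.succ_le_of_lt h
          linarith
      rw [hii'] at h2
      linarith
    · have h : i' < i := by omega
      have h1 : p i < 1 / ((i : ℚ) + 1) := (hpbd i).2
      have h2 : 1 / ((i' : ℚ) + 2) < p i' := (hpbd i').1
      have h3 : 1 / ((i : ℚ) + 1) ≤ 1 / ((i' : ℚ) + 2) := by
        apply one_div_le_one_div_of_le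
        · positivity
        · have : (i' : ℚ) + 1 ≤ (i : ℚ) := by exact_mod_cast Nat.succ_le_of_lt h
          linarith
      rw [hii'] at h1
      linarith
  set A : Set ℚ := Set.range p with hA
  have hAbd : ∀ q ∈ A, 0 < q ∧ q ≤ 1 := by
    rintro q ⟨i, rfl⟩
    refine ⟨hppos i, ?_⟩
    have h1 := (hpbd i).2
    have h2 : 1 / ((i : ℚ) + 1) ≤ 1 := by
      rw [div_le_one (by positivity)]
      have : (0 : ℚ) ≤ (i : ℚ) := by positivity
      linarith
    linarith
  have hclo : closure A ⊆ insert 0 A := by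
    intro r hr
    by_contra hrn
    have hr0 : r ≠ 0 := fun h => hrn (h ▸ Set.mem_insert 0 A)
    have hrA : r ∉ A := fun h => hrn (Set.mem_insert_of_mem 0 h)
    rcases lt_or_gt_of_ne hr0 with hneg | hpos
    · rw [mem_closure_iff] at hr
      obtain ⟨y, hy1, hy2⟩ := hr (Set.Iio 0) isOpen_Iio hneg
      exact absurd (hAbd y hy2).1 (not_lt.2 (le_of_lt hy1))
    · obtain ⟨n0, hn0⟩ := exists_nat_gt (1 / r)
      have hrlb : 1 / ((n0 : ℚ) + 1) < r := by
        rw [div_lt_iff₀ (by positivity)]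
        have h2 : (1 : ℚ) < r * ((n0 : ℚ) + 1) := by
          have h3 : 1 / r < (n0 : ℚ) + 1 := by linarith
          calc (1 : ℚ) = r * (1 / r) := by field_simp
          _ < r * ((n0 : ℚ) + 1) := by
            apply mul_lt_mul_of_pos_left h3 hpos
        linarith
      set F : Set ℚ := p '' {i | i < n0} with hF
      have hFfin : F.Finite := ((Set.finite_Iio n0).image p)
      have hUo : IsOpen (Set.Ioi (1 / ((n0 : ℚ) + 1)) \ (F \ {r})) :=
        isOpen_Ioi.sdiff ((hFfin.sdiff (t := {r})).isClosed)
      have hrU : r ∈ Set.Ioi (1 / ((n0 : ℚ) + 1)) \ (F \ {r}) :=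
        ⟨hrlb, fun hF' => hF'.2 rfl⟩
      rw [mem_closure_iff] at hr
      obtain ⟨y, hy1, hy2⟩ := hr _ hUo hrU
      obtain ⟨i, rfl⟩ := hy2
      have hiF : p i ∈ F := by
        refine ⟨i, ?_, rfl⟩
        have h1 := (hpbd i).2
        have h2 : (1 : ℚ) / ((n0 : ℚ) + 1) < 1 / ((i : ℚ) + 1) := lt_trans hy1.1 h1
        have h3 : (i : ℚ) + 1 < (n0 : ℚ) + 1 := by
          by_contra hcon
          push_neg at hcon
          have h4 := one_div_le_one_div_of_le (by positivity : (0 : ℚ) < (n0 : ℚ) + 1) hcon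
          linarith
        have h5 : (i : ℚ) < (n0 : ℚ) := by linarith
        exact_mod_cast h5
      by_cases he : p i = r
      · exact hrA (he ▸ Set.mem_range_self i)
      · exact hy1.2 ⟨hiF, he⟩
  have hAnwd : IsNowhereDense A := by
    rw [IsNowhereDense, Set.eq_empty_iff_forall_notMem]
    intro x hx
    have hxcl : x ∈ closure A := interior_subset hx
    have hx01 : 0 ≤ x := by
      rcases hclo hxcl with h | hxA
      · rw [h]
      · exact le_of_lt (hAbd x hxA).1
    obtain ⟨l, u, hlu, hsub⟩ := mem_nhds_iff_exists_Ioo_subset.1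
      (isOpen_interior.mem_nhds hx)
    have hIoosub : Set.Ioo l u ⊆ insert 0 A :=
      fun y hy => hclo (interior_subset (hsub hy))
    have hmaxlu : max l 0 < u := max_lt (lt_trans hlu.1 hlu.2) (lt_of_le_of_lt hx01 hlu.2)
    obtain ⟨c, hc1, hc2⟩ := exists_between hmaxlu
    have hcpos : 0 < c := lt_of_le_of_lt (le_max_right l 0) hc1
    have hcl' : l < c := lt_of_le_of_lt (le_max_left l 0) hc1
    obtain ⟨N, hN⟩ := exists_nat_gt (1 / c)
    have hTfin : (A ∩ Set.Ioi c).Finite := by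
      apply Set.Finite.subset ((Set.finite_Iio N).image p)
      rintro y ⟨⟨i, rfl⟩, hyc⟩
      refine ⟨i, ?_, rfl⟩
      have h1 := (hpbd i).2
      have h2 : c < 1 / ((i : ℚ) + 1) := lt_trans hyc h1
      have h3 : c * ((i : ℚ) + 1) < 1 := (lt_div_iff₀ (by positivity)).1 h2
      have h4 : ((i : ℚ) + 1) * c < 1 := by rw [mul_comm]; exact h3
      have h5 : (i : ℚ) + 1 < 1 / c := (lt_div_iff₀ hcpos).2 h4
      have h6 : (i : ℚ) < (N : ℚ) := by linarith
      exact_mod_cast h6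
    have hy' : ((Set.Ioo c u) \ (A ∩ Set.Ioi c)).Nonempty :=
      ((Set.Ioo_infinite hc2).diff hTfin).nonempty
    obtain ⟨y, hy1, hy2⟩ := hy'
    have hyI : y ∈ insert 0 A := hIoosub ⟨lt_trans hcl' hy1.1, hy1.2⟩
    rcases hyI with rfl | hyA
    · exact absurd hy1.1 (not_lt.2 (le_of_lt hcpos))
    · exact hy2 ⟨hyA, hy1.1⟩
  refine ⟨A, hAnwd, ?_⟩
  intro n
  apply Set.infinite_of_injective_forall_mem (f := fun j : ℕ => p (n + j))
  · intro j j' hjj'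
    have := hpinj hjj'
    omega
  · intro j
    refine ⟨⟨n + j, rfl⟩, ?_⟩
    intro hXn
    exact hp2 (n + j) (hYsub n (n + j) (by omega) hXn)

end Stmt14

/-- `add(𝓜) ≤ add*_ω(nwd)`. -/
theorem stmt14 : addMeager ≤ addStarOmega nwdIdeal := by
  apply le_csInf
  · exact ⟨#nwdIdeal, nwdIdeal, subset_rfl, Stmt14.property_nwdIdeal, rfl⟩
  · rintro c ⟨𝒜, h𝒜, hP, rfl⟩
    exact Stmt14.main_bound 𝒜 h𝒜 hP
end

section
/- non*_ω(𝓔𝓓) ≤ 𝔡. -/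
open Cardinal

/-- The dominating number `𝔡`. -/
noncomputable def domNumber : Cardinal :=
  sInf {c | ∃ D : Set (ℕ → ℕ),
    (∀ g : ℕ → ℕ, ∃ h ∈ D, ∀ᶠ n in Filter.atTop, g n ≤ h n) ∧ c = #D}

/-- `non*_ω(I)`: the least cardinality of a family `𝒜` of infinite subsets such
that for every sequence `(X_n)` of sets in `I` some `A ∈ 𝒜` satisfies that
`A ∩ X_n` is finite for every `n`. -/
noncomputable def nonStarOmega {α : Type*} (I : Set (Set α)) : Cardinal :=
  sInf {c | ∃ 𝒜 : Set (Set α), (∀ A ∈ 𝒜, A.Infinite) ∧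
    (∀ X : ℕ → Set α, (∀ n, X n ∈ I) → ∃ A ∈ 𝒜, ∀ n, (A ∩ X n).Finite) ∧
    c = #𝒜}

/-- The ideal `𝓔𝓓` on `ℕ × ℕ`: sets `A` for which there is `N` such that for
all `n > N` the section `{m : (n,m) ∈ A}` has at most `N` elements. -/
def EDIdeal : Set (Set (ℕ × ℕ)) :=
  {A | ∃ N : ℕ, ∀ n > N,
    {m : ℕ | (n, m) ∈ A}.Finite ∧ {m : ℕ | (n, m) ∈ A}.ncard ≤ N}

/-- `non*_ω(𝓔𝓓) ≤ 𝔡`. -/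
theorem stmt16 : nonStarOmega EDIdeal ≤ domNumber := by
  classical
  apply le_csInf
  · exact ⟨#(Set.univ : Set (ℕ → ℕ)), Set.univ,
      fun g => ⟨g, Set.mem_univ g, Filter.Eventually.of_forall fun n => le_rfl⟩, rfl⟩
  rintro c ⟨D, hD, rfl⟩
  have key : #((fun h : ℕ → ℕ => Set.range fun k => (k, h k)) '' D) ∈
      {c | ∃ 𝒜 : Set (Set (ℕ × ℕ)), (∀ A ∈ 𝒜, A.Infinite) ∧
        (∀ X : ℕ → Set (ℕ × ℕ), (∀ n, X n ∈ EDIdeal) →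
          ∃ A ∈ 𝒜, ∀ n, (A ∩ X n).Finite) ∧ c = #𝒜} := by
    refine ⟨_, ?_, ?_, rfl⟩
    · rintro A ⟨h, -, rfl⟩
      exact Set.infinite_range_of_injective fun a b hab => congrArg Prod.fst hab
    · intro X hX
      choose N hN using hX
      set b : ℕ → ℕ → ℕ := fun n k =>
        if hf : {m | (k, m) ∈ X n}.Finite then hf.toFinset.sup id else 0 with hb
      set g : ℕ → ℕ := fun k => 1 + (Finset.range (k + 1)).sup (fun n => b n k) with hg
      obtain ⟨h, hhD, hgh⟩ := hD g
      refine ⟨Set.range fun k => (k, h k), ⟨h, hhD, rfl⟩, ?_⟩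
      intro n
      obtain ⟨K, hK⟩ := Filter.eventually_atTop.mp hgh
      set M := max K (max (N n + 1) (n + 1)) with hM
      have hsub : (Set.range fun k => (k, h k)) ∩ X n ⊆
          (fun k => (k, h k)) '' Set.Iio M := by
        rintro p ⟨⟨k, rfl⟩, hp⟩
        refine ⟨k, ?_, rfl⟩
        simp only [Set.mem_Iio]
        by_contra hk
        push_neg at hk
        have hkK : K ≤ k := le_trans (le_max_left _ _) hk
        have hkN : N n < k :=
          lt_of_lt_of_le (Nat.lt_succ_self _)
            (le_trans (le_trans (le_max_left _ _) (le_max_right _ _)) hk)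
        have hkn : n < k + 1 :=
          lt_of_lt_of_le (Nat.lt_succ_self _)
            (le_trans (le_trans (le_max_right _ _) (le_max_right _ _)) (hk.trans (Nat.le_succ _)))
        have hfin := (hN n k hkN).1
        have hmem : h k ∈ {m | (k, m) ∈ X n} := hp
        have h1 : h k ≤ b n k := by
          simp only [hb, dif_pos hfin]
          exact Finset.le_sup (f := id) (hfin.mem_toFinset.mpr hmem)
        have h2 : b n k ≤ (Finset.range (k + 1)).sup (fun n => b n k) :=
          Finset.le_sup (f := fun n => b n k) (Finset.mem_range.mpr hkn)
        have h3 : g k ≤ h k := hK k hkK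
        have h4 : g k = 1 + (Finset.range (k + 1)).sup (fun n => b n k) := rfl
        omega
      exact Set.Finite.subset ((Set.finite_Iio M).image _) hsub
  exact le_trans (csInf_le' key) Cardinal.mk_image_le
end

section
/- Let 𝒟 be a family of interval partitions of ℕ with |𝒟| < 𝔡. Then there exists an interval partition R = (R_n)_{n<ω} such that for every P = (P_k)_{k<ω} in 𝒟 there are infinitely many n for which some interval P_k of P is contained in R_n. -/
open Cardinal

/-- An interval partition of `ℕ`: a sequence of consecutive nonempty finite
intervals `P n = [e n, e (n+1))` starting at `0` and covering `ℕ`. -/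
def IsIntervalPartition (P : ℕ → Set ℕ) : Prop :=
  ∃ e : ℕ → ℕ, StrictMono e ∧ e 0 = 0 ∧ ∀ n, P n = Set.Ico (e n) (e (n + 1))

/-- For any family `𝒟` of interval partitions with `|𝒟| < 𝔡` there is an
interval partition `R` such that every `P ∈ 𝒟` has, for infinitely many `n`,
some interval contained in `R n`. -/
theorem stmt19 (𝒟 : Set (ℕ → Set ℕ)) (h𝒟 : ∀ P ∈ 𝒟, IsIntervalPartition P)
    (hcard : #𝒟 < domNumber) :
    ∃ R : ℕ → Set ℕ, IsIntervalPartition R ∧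
      ∀ P ∈ 𝒟, {n : ℕ | ∃ k, P k ⊆ R n}.Infinite := by
  classical
  choose e hmono h0 hIco using h𝒟
  set g : 𝒟 → ℕ → ℕ := fun p m => e p.1 p.2 (m + 2) with hg
  have hnd : ∃ f : ℕ → ℕ, ∀ p : 𝒟, {m | g p m < f m}.Infinite := by
    by_contra hcon
    push_neg at hcon
    have hdom : ∀ f0 : ℕ → ℕ, ∃ h' ∈ Set.range g, ∀ᶠ n in Filter.atTop, f0 n ≤ h' n := by
      intro f0
      obtain ⟨p, hp⟩ := hcon f0
      refine ⟨g p, Set.mem_range_self p, ?_⟩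
      have h1 : ∀ᶠ m in Filter.cofinite, m ∉ {m | g p m < f0 m} :=
        hp.eventually_cofinite_notMem
      rw [Nat.cofinite_eq_atTop] at h1
      exact h1.mono fun m hm => not_lt.1 hm
    have h2 : domNumber ≤ #(Set.range g) := csInf_le' ⟨Set.range g, hdom, rfl⟩
    exact absurd ((h2.trans Cardinal.mk_range_le).trans_lt hcard) (lt_irrefl _)
  obtain ⟨f, hf⟩ := hnd
  set F : ℕ → ℕ := fun m => (Finset.range (m + 1)).sup f with hF
  have hFf : ∀ m, f m ≤ F m := fun m => Finset.le_sup (Finset.self_mem_range_succ m)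
  have hFmono : Monotone F := fun a b hab =>
    Finset.sup_mono (Finset.range_subset_range.2 (by omega))
  let r : ℕ → ℕ := fun n => Nat.rec 0 (fun _ rk => F rk + rk + 1) n
  have hr0 : r 0 = 0 := rfl
  have hrs : ∀ n, r (n + 1) = F (r n) + r n + 1 := fun n => rfl
  have hrmono : StrictMono r := strictMono_nat_of_lt_succ fun n => by
    rw [hrs]; omega
  refine ⟨fun n => Set.Ico (r n) (r (n + 1)), ⟨r, hrmono, hr0, fun n => rfl⟩, ?_⟩
  intro P hP
  have hinf := hf ⟨P, hP⟩
  apply Set.infinite_of_forall_exists_gt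
  intro N
  obtain ⟨m, hmS, hmgt⟩ := hinf.exists_gt (r (N + 1))
  have hmS' : e P hP (m + 2) < f m := hmS
  have hex : ∃ j, m < r (j + 1) := ⟨m, lt_of_lt_of_le (Nat.lt_succ_self m) (hrmono.le_apply)⟩
  have hlt : m < r (Nat.find hex + 1) := Nat.find_spec hex
  set n := Nat.find hex with hn
  have hge : r n ≤ m := by
    by_cases hn0 : n = 0
    · rw [hn0, hr0]; exact Nat.zero_le m
    · obtain ⟨k, hk⟩ : ∃ k, n = k + 1 := ⟨n - 1, by omega⟩
      have := Nat.find_min hex (show k < n by omega)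
      rw [hk]
      exact not_lt.1 this
  have hNn : N < n := by
    have : r (N + 1) < r (n + 1) := lt_trans hmgt hlt
    have : N + 1 < n + 1 := hrmono.lt_iff_lt.1 this
    omega
  have hme : m ≤ e P hP m := (hmono P hP).le_apply
  have hbound : e P hP (m + 2) ≤ r (n + 2) := by
    have h1 : f m ≤ F m := hFf m
    have h2 : F m ≤ F (r (n + 1)) := hFmono (le_of_lt hlt)
    have h3 : r (n + 2) = F (r (n + 1)) + r (n + 1) + 1 := hrs (n + 1)
    omega
  by_cases hcase : e P hP (m + 1) ≤ r (n + 1)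
  · refine ⟨n, ⟨m, ?_⟩, hNn⟩
    rw [hIco P hP m]
    exact Set.Ico_subset_Ico (le_trans hge hme) hcase
  · refine ⟨n + 1, ⟨m + 1, ?_⟩, by omega⟩
    rw [hIco P hP (m + 1)]
    exact Set.Ico_subset_Ico (le_of_not_ge hcase) hbound
end
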